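/- arXiv:2009.10666 — 8 statements merged into one kernel-verified Lean document; each statement's English description precedes it below -/
import Mathlib

section
/- Let N ≥ 1, let A be an N×N real matrix with nonnegative entries and zero diagonal, and let L = D − A be the associated Laplacian, where D is diagonal with D_{ii} = Σ_j A_{ij}. Then every complex eigenvalue μ of L (viewing L as a complex matrix) satisfies Re μ ≥ 0, and moreover if Re μ = 0 then μ = 0; that is, every nonzero eigenvalue of L has strictly positive real part. -/
/-!
In each row of `L = D - A` the diagonal entry equals the sum of the absolute values of the
off-diagonal entries, so every Gershgorin disc of `L` has the form `closedBall r r` with `r ≥ 0`.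
Such a disc lies in the closed right half-plane and meets the imaginary axis only at `0`.
-/

open Finset Module

namespace Complex

theorem normSq_le_two_mul_mul_re_of_dist_le {μ : ℂ} {r : ℝ} (h : dist μ r ≤ r) :
    normSq μ ≤ 2 * r * μ.re := by
  have hsq : (μ.re - r) ^ 2 + μ.im ^ 2 ≤ r ^ 2 := by
    have hdist : dist μ r ^ 2 = (μ.re - r) ^ 2 + μ.im ^ 2 := by
      rw [dist_eq_norm, Complex.sq_norm, normSq_apply]
      simp only [sub_re, ofReal_re, sub_im, ofReal_im, sub_zero]
      ring
    rw [← hdist]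
    exact pow_le_pow_left₀ dist_nonneg h 2
  rw [normSq_apply]
  nlinarith

theorem re_nonneg_of_dist_le {μ : ℂ} {r : ℝ} (h : dist μ r ≤ r) : 0 ≤ μ.re := by
  have hr : 0 ≤ r := dist_nonneg.trans h
  have := normSq_le_two_mul_mul_re_of_dist_le h
  rw [normSq_apply] at this
  nlinarith [sq_nonneg μ.re, sq_nonneg μ.im]

theorem eq_zero_of_dist_le_of_re_eq_zero {μ : ℂ} {r : ℝ} (h : dist μ r ≤ r) (hre : μ.re = 0) :
    μ = 0 := by
  have := normSq_le_two_mul_mul_re_of_dist_le h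
  rw [hre, mul_zero] at this
  exact normSq_eq_zero.mp (le_antisymm this (normSq_nonneg μ))

end Complex

namespace Matrix

variable {ι : Type*} [Fintype ι] [DecidableEq ι]

section Laplacian

variable {R : Type*} [AddCommGroup R] (A : Matrix ι ι R)

def laplacian : Matrix ι ι R :=
  diagonal (fun i => ∑ j, A i j) - A

theorem laplacian_apply_self (i : ι) : laplacian A i i = ∑ j ∈ univ.erase i, A i j := by
  rw [laplacian, sub_apply, diagonal_apply_eq, ← add_sum_erase _ _ (mem_univ i),
    add_sub_cancel_left]

theorem laplacian_apply_of_ne {i j : ι} (h : i ≠ j) : laplacian A i j = -A i j := by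
  rw [laplacian, sub_apply, diagonal_apply_ne _ h, zero_sub]

end Laplacian

theorem exists_dist_le_of_hasEigenvalue_laplacian {A : Matrix ι ι ℝ}
    (hA : ∀ i j, i ≠ j → 0 ≤ A i j) {μ : ℂ}
    (hμ : End.HasEigenvalue (toLin' ((laplacian A).map Complex.ofReal)) μ) :
    ∃ k, dist μ (∑ j ∈ univ.erase k, A k j : ℝ) ≤ ∑ j ∈ univ.erase k, A k j := by
  obtain ⟨k, hk⟩ := eigenvalue_mem_ball hμ
  have hcenter : (laplacian A).map Complex.ofReal k k = (∑ j ∈ univ.erase k, A k j : ℝ) := by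
    rw [map_apply, laplacian_apply_self]
  have hradius :
      ∑ j ∈ univ.erase k, ‖(laplacian A).map Complex.ofReal k j‖ = ∑ j ∈ univ.erase k, A k j :=
    sum_congr rfl fun j hj => by
      have hkj : k ≠ j := (ne_of_mem_erase hj).symm
      rw [map_apply, laplacian_apply_of_ne A hkj, Complex.norm_real, Real.norm_eq_abs, abs_neg,
        abs_of_nonneg (hA k j hkj)]
  exact ⟨k, by rwa [Metric.mem_closedBall, hcenter, hradius] at hk⟩

end Matrix

theorem laplacian_eigenvalues_nonneg_real_part_general
    (N : ℕ) (A : Matrix (Fin N) (Fin N) ℝ)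
    (hnonneg : ∀ i j, 0 ≤ A i j)
    (L : Matrix (Fin N) (Fin N) ℝ)
    (hL : L = Matrix.diagonal (fun i => ∑ j, A i j) - A)
    (μ : ℂ) (w : Fin N → ℂ) (hw : w ≠ 0)
    (heig : (L.map Complex.ofReal).mulVec w = μ • w) :
    0 ≤ μ.re ∧ (μ.re = 0 → μ = 0) := by
  have hμ : End.HasEigenvalue (Matrix.toLin' (A.laplacian.map Complex.ofReal)) μ :=
    End.hasEigenvalue_of_hasEigenvector (x := w)
      ⟨End.mem_eigenspace_iff.mpr (by rwa [Matrix.toLin'_apply, Matrix.laplacian, ← hL]), hw⟩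
  obtain ⟨k, hk⟩ :=
    Matrix.exists_dist_le_of_hasEigenvalue_laplacian (fun i j _ => hnonneg i j) hμ
  exact ⟨Complex.re_nonneg_of_dist_le hk, Complex.eq_zero_of_dist_le_of_re_eq_zero hk⟩

/-- For the Laplacian `L = D - A` of a weighted digraph with
nonnegative adjacency matrix `A` and zero diagonal, every complex eigenvalue `μ`
of `L` has `Re μ ≥ 0`, and if `Re μ = 0` then `μ = 0`; i.e. every nonzero
eigenvalue has strictly positive real part. -/
theorem laplacian_eigenvalues_nonneg_real_part
    (N : ℕ) (hN : 1 ≤ N) (A : Matrix (Fin N) (Fin N) ℝ)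
    (hnonneg : ∀ i j, 0 ≤ A i j) (hdiag : ∀ i, A i i = 0)
    (L : Matrix (Fin N) (Fin N) ℝ)
    (hL : L = Matrix.diagonal (fun i => ∑ j, A i j) - A)
    (μ : ℂ) (w : Fin N → ℂ) (hw : w ≠ 0)
    (heig : (L.map Complex.ofReal).mulVec w = μ • w) :
    0 ≤ μ.re ∧ (μ.re = 0 → μ = 0) :=
  laplacian_eigenvalues_nonneg_real_part_general N A hnonneg L hL μ w hw heig
end

section
/- Let N ≥ 2 and let M be a real symmetric positive semidefinite N×N matrix with M·1_N = 0, where 1_N is the all-ones vector. Suppose λ₂ > 0 is a constant such that vᵀ M v ≥ λ₂ ‖v‖² for every v ∈ ℝ^N with Σ_i v_i = 0. Then for every vector ζ ∈ ℝ^N with all entries strictly positive and every x ∈ ℝ^N with x ≠ 0 and ζᵀ x = 0, one has xᵀ M x / (xᵀ x) > λ₂ / N. -/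
/-!
Orthogonality to an entrywise positive `ζ` forces `x` to have entries of both signs, and this
gives the sharpened Cauchy–Schwarz bound `(∑ xᵢ)² < (N - 1) ‖x‖²`. Since `M` is symmetric and
kills `1`, the quadratic form is unchanged by subtracting the mean of `x`, so the spectral gap
applies to the centred vector, whose squared norm is `‖x‖² - (∑ xᵢ)² / N > ‖x‖² / N`.
-/

open Matrix Finset

theorem exists_pos_and_neg_of_dotProduct_eq_zero {ι : Type*} [Fintype ι] {ζ x : ι → ℝ}
    (hζ : ∀ i, 0 < ζ i) (hx : x ≠ 0) (hζx : ζ ⬝ᵥ x = 0) :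
    (∃ i, 0 < x i) ∧ ∃ j, x j < 0 := by
  obtain ⟨k, hk⟩ := Function.ne_iff.mp hx
  constructor
  · by_contra! h
    have : ζ ⬝ᵥ x < 0 :=
      sum_neg' (fun i _ => mul_nonpos_of_nonneg_of_nonpos (hζ i).le (h i))
        ⟨k, mem_univ k, mul_neg_of_pos_of_neg (hζ k) ((h k).lt_of_ne hk)⟩
    exact this.ne hζx
  · by_contra! h
    have : 0 < ζ ⬝ᵥ x :=
      sum_pos' (fun i _ => mul_nonneg (hζ i).le (h i))
        ⟨k, mem_univ k, mul_pos (hζ k) ((h k).lt_of_ne' hk)⟩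
    exact this.ne' hζx

theorem sq_sum_lt_card_sub_one_mul_sum_sq_of_sum_nonneg {ι : Type*} [Fintype ι] [DecidableEq ι]
    {x : ι → ℝ} {i j : ι} (hi : 0 < x i) (hj : x j < 0) (hs : 0 ≤ ∑ k, x k) :
    (∑ k, x k) ^ 2 < (Fintype.card ι - 1) * ∑ k, x k ^ 2 := by
  have hcard : ((univ.erase j).card : ℝ) = Fintype.card ι - 1 := by
    rw [card_erase_of_mem (mem_univ j), card_univ, Nat.cast_pred (Fintype.card_pos_iff.mpr ⟨j⟩)]
  have hcard_pos : (0 : ℝ) < (univ.erase j).card := by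
    exact_mod_cast card_pos.mpr ⟨i, mem_erase.mpr ⟨ne_of_apply_ne x (hj.trans hi).ne', mem_univ i⟩⟩
  calc (∑ k, x k) ^ 2 ≤ (∑ k ∈ univ.erase j, x k) ^ 2 := by
        rw [sum_erase_eq_sub (mem_univ j)]; nlinarith
    _ ≤ (univ.erase j).card * ∑ k ∈ univ.erase j, x k ^ 2 := sq_sum_le_card_mul_sum_sq
    _ < (Fintype.card ι - 1) * ∑ k, x k ^ 2 := by
        rw [sum_erase_eq_sub (mem_univ j), ← hcard]
        nlinarith [mul_pos hcard_pos (pow_pos (neg_pos.mpr hj) 2)]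

theorem sq_sum_lt_card_sub_one_mul_dotProduct_self {ι : Type*} [Fintype ι] {x : ι → ℝ}
    {i j : ι} (hi : 0 < x i) (hj : x j < 0) :
    (∑ k, x k) ^ 2 < (Fintype.card ι - 1) * (x ⬝ᵥ x) := by
  classical
  simp only [dotProduct, ← sq]
  rcases le_or_gt 0 (∑ k, x k) with hs | hs
  · exact sq_sum_lt_card_sub_one_mul_sum_sq_of_sum_nonneg hi hj hs
  · simpa using sq_sum_lt_card_sub_one_mul_sum_sq_of_sum_nonneg (x := -x) (neg_pos.mpr hj)
      (neg_neg_of_pos hi) (by simpa using hs.le)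

theorem dotProduct_mulVec_sub_smul_one {n R : Type*} [Fintype n] [CommRing R]
    {M : Matrix n n R} (hM : M.IsSymm) (hone : M *ᵥ 1 = 0) (x : n → R) (c : R) :
    (x - c • 1) ⬝ᵥ M *ᵥ (x - c • 1) = x ⬝ᵥ M *ᵥ x := by
  have h1 : (1 : n → R) ⬝ᵥ M *ᵥ x = 0 := by
    rw [dotProduct_mulVec, ← mulVec_transpose, hM.eq, hone, zero_dotProduct]
  simp [mulVec_sub, mulVec_smul, hone, sub_dotProduct, h1]

section Centring

variable {ι K : Type*} [Fintype ι] [Nonempty ι] [Field K] [CharZero K]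

theorem sum_sub_mean_smul_one (x : ι → K) :
    ∑ i, (x - ((∑ k, x k) / Fintype.card ι) • 1) i = 0 := by
  simp only [Pi.sub_apply, Pi.smul_apply, Pi.one_apply, smul_eq_mul, mul_one, sum_sub_distrib,
    sum_const, card_univ, nsmul_eq_mul]
  field_simp
  ring

theorem dotProduct_self_sub_mean_smul_one (x : ι → K) :
    (x - ((∑ k, x k) / Fintype.card ι) • 1) ⬝ᵥ (x - ((∑ k, x k) / Fintype.card ι) • 1) =
      x ⬝ᵥ x - (∑ k, x k) ^ 2 / Fintype.card ι := by
  simp only [dotProduct_sub, sub_dotProduct, smul_dotProduct, one_dotProduct, smul_eq_mul,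
    dotProduct_smul, dotProduct_one, Pi.sub_apply, Pi.smul_apply, Pi.one_apply, mul_one,
    sum_sub_distrib, sum_const, card_univ, nsmul_eq_mul]
  field_simp
  ring

end Centring

theorem mul_sub_sq_sum_div_card_le_of_spectral_gap {ι : Type*} [Fintype ι] [Nonempty ι]
    {M : Matrix ι ι ℝ} (hM : M.IsSymm) (hone : M *ᵥ 1 = 0) {lam : ℝ}
    (hgap : ∀ v : ι → ℝ, ∑ i, v i = 0 → lam * (v ⬝ᵥ v) ≤ v ⬝ᵥ M *ᵥ v) (x : ι → ℝ) :
    lam * (x ⬝ᵥ x - (∑ k, x k) ^ 2 / Fintype.card ι) ≤ x ⬝ᵥ M *ᵥ x := by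
  have := hgap _ (sum_sub_mean_smul_one x)
  rwa [dotProduct_self_sub_mean_smul_one, dotProduct_mulVec_sub_smul_one hM hone] at this

theorem rayleigh_quotient_bound_on_zeta_orthogonal_general
    (N : ℕ) (M : Matrix (Fin N) (Fin N) ℝ)
    (hsymm : M.IsSymm)
    (hone : M.mulVec (fun _ => 1) = 0)
    (lam₂ : ℝ) (hlam₂ : 0 < lam₂)
    (hgap : ∀ v : Fin N → ℝ, ∑ i, v i = 0 → lam₂ * (v ⬝ᵥ v) ≤ v ⬝ᵥ M.mulVec v)
    (ζ x : Fin N → ℝ) (hζ : ∀ i, 0 < ζ i) (hx : x ≠ 0) (hζx : ζ ⬝ᵥ x = 0) :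
    x ⬝ᵥ M.mulVec x / (x ⬝ᵥ x) > lam₂ / N := by
  obtain ⟨⟨i, hi⟩, j, hj⟩ := exists_pos_and_neg_of_dotProduct_eq_zero hζ hx hζx
  have : Nonempty (Fin N) := ⟨i⟩
  have hN : (0 : ℝ) < N := by exact_mod_cast i.pos
  have hxx : 0 < x ⬝ᵥ x := by simpa using dotProduct_self_star_pos_iff.mpr hx
  have hsq := sq_sum_lt_card_sub_one_mul_dotProduct_self hi hj
  have hbound := mul_sub_sq_sum_div_card_le_of_spectral_gap hsymm hone hgap x
  rw [Fintype.card_fin] at hsq hbound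
  rw [gt_iff_lt, div_lt_div_iff₀ hN hxx]
  calc lam₂ * (x ⬝ᵥ x) < lam₂ * (x ⬝ᵥ x - (∑ k, x k) ^ 2 / N) * N := by
        rw [mul_assoc, sub_mul, div_mul_cancel₀ _ hN.ne']
        exact mul_lt_mul_of_pos_left (by linarith) hlam₂
    _ ≤ x ⬝ᵥ M *ᵥ x * N := mul_le_mul_of_nonneg_right hbound hN.le

/-- If `M` is a real symmetric positive semidefinite `N×N` matrix
(`N ≥ 2`) with `M·1 = 0` and spectral-gap constant `λ₂ > 0` on the sum-zero subspace,
then for every entrywise positive `ζ` and every nonzero `x` with `ζᵀ x = 0` one has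
`xᵀ M x / (xᵀ x) > λ₂ / N`. -/
theorem rayleigh_quotient_bound_on_zeta_orthogonal
    (N : ℕ) (hN : 2 ≤ N) (M : Matrix (Fin N) (Fin N) ℝ)
    (hsymm : M.IsSymm)
    (hpsd : ∀ v : Fin N → ℝ, 0 ≤ v ⬝ᵥ M.mulVec v)
    (hone : M.mulVec (fun _ => 1) = 0)
    (lam₂ : ℝ) (hlam₂ : 0 < lam₂)
    (hgap : ∀ v : Fin N → ℝ, ∑ i, v i = 0 → lam₂ * (v ⬝ᵥ v) ≤ v ⬝ᵥ M.mulVec v)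
    (ζ x : Fin N → ℝ) (hζ : ∀ i, 0 < ζ i) (hx : x ≠ 0) (hζx : ζ ⬝ᵥ x = 0) :
    x ⬝ᵥ M.mulVec x / (x ⬝ᵥ x) > lam₂ / N :=
  rayleigh_quotient_bound_on_zeta_orthogonal_general N M hsymm hone lam₂ hlam₂ hgap ζ x hζ hx hζx
end

section
/- Let E = ℝ^n with the Euclidean inner product and let F : E → E be continuous and ε-strongly monotone for some ε > 0, i.e., ⟨x − y, F(x) − F(y)⟩ ≥ ε‖x − y‖² for all x, y ∈ E. Then F has exactly one zero: there exists a unique x* ∈ E with F(x*) = 0. -/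
open scoped RealInnerProductSpace
open Filter Topology Module

/-!
Induction on the dimension. Pick a unit vector `e` and let `K = (ℝ ∙ e)ᗮ`. For `u ∈ K` the scalar
function `t ↦ ⟪e, F (u + t • e)⟫` is `ε`-strongly monotone, so by the intermediate value theorem it
has a zero `τ u`; the estimate `ε * ‖x - y‖ ≤ ‖F x - F y‖` makes `τ` continuous. On the graph
`u ↦ u + τ u • e` the map `F` takes values in `K`, and by Pythagoras it is again `ε`-strongly
monotone as a map `K → K`, so it has a zero by induction. The same estimate gives uniqueness.
-/

def StronglyMonotone {E : Type*} [NormedAddCommGroup E] [InnerProductSpace ℝ E] (ε : ℝ)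
    (F : E → E) : Prop :=
  ∀ x y, ε * ‖x - y‖ ^ 2 ≤ ⟪x - y, F x - F y⟫

namespace StronglyMonotone

variable {E : Type*} [NormedAddCommGroup E] [InnerProductSpace ℝ E] {ε : ℝ} {F : E → E}

theorem mul_norm_sub_le (hF : StronglyMonotone ε F) (x y : E) : ε * ‖x - y‖ ≤ ‖F x - F y‖ := by
  rcases (norm_nonneg (x - y)).eq_or_lt with h | h
  · rw [← h, mul_zero]
    exact norm_nonneg _
  · refine le_of_mul_le_mul_right ?_ h
    calc ε * ‖x - y‖ * ‖x - y‖ = ε * ‖x - y‖ ^ 2 := by ring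
      _ ≤ ⟪x - y, F x - F y⟫ := hF x y
      _ ≤ ‖x - y‖ * ‖F x - F y‖ := real_inner_le_norm _ _
      _ = ‖F x - F y‖ * ‖x - y‖ := mul_comm _ _

theorem injective (hF : StronglyMonotone ε F) (hε : 0 < ε) : Function.Injective F := by
  intro x y hxy
  have h := hF.mul_norm_sub_le x y
  rw [hxy, sub_self, norm_zero] at h
  exact sub_eq_zero.mp (norm_le_zero_iff.mp (nonpos_of_mul_nonpos_right h hε))

theorem slice (hF : StronglyMonotone ε F) {e : E} (he : ‖e‖ = 1) (u : E) :
    StronglyMonotone ε fun t : ℝ => ⟪e, F (u + t • e)⟫ := by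
  intro s t
  have h := hF (u + s • e) (u + t • e)
  rw [add_sub_add_left_eq_sub, ← sub_smul, norm_smul, he, mul_one, real_inner_smul_left,
    inner_sub_right] at h
  simpa [mul_comm] using h

theorem mul_sub_le_sub {f : ℝ → ℝ} (hf : StronglyMonotone ε f) {s t : ℝ} (hts : t ≤ s) :
    ε * (s - t) ≤ f s - f t := by
  rcases hts.eq_or_lt with rfl | hts
  · simp
  · refine le_of_mul_le_mul_right ?_ (sub_pos.mpr hts)
    have h := hf s t
    simp only [Real.norm_eq_abs, sq_abs, RCLike.inner_apply, conj_trivial] at h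
    linarith

theorem exists_eq_zero_of_real {f : ℝ → ℝ} (hf : StronglyMonotone ε f) (hε : 0 < ε)
    (hc : Continuous f) : ∃ t, f t = 0 := by
  set b := |f 0| / ε
  have hb : 0 ≤ b := by positivity
  have hεb : ε * b = |f 0| := mul_div_cancel₀ _ hε.ne'
  have h₁ : ε * b ≤ f b - f 0 := by simpa using hf.mul_sub_le_sub hb
  have h₂ : ε * b ≤ f 0 - f (-b) := by simpa using hf.mul_sub_le_sub (neg_nonpos.mpr hb)
  have h₀ : (0 : ℝ) ∈ Set.Icc (f (-b)) (f b) :=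
    ⟨by linarith [le_abs_self (f 0)], by linarith [neg_abs_le (f 0)]⟩
  obtain ⟨t, -, ht⟩ := intermediate_value_Icc (neg_le_self hb) hc.continuousOn h₀
  exact ⟨t, ht⟩


theorem restrict (hF : StronglyMonotone ε F) (hε : 0 ≤ ε) {K : Submodule ℝ E} (x : K → E)
    (hx : ∀ u, x u - u ∈ Kᗮ) (hFx : ∀ u, F (x u) ∈ K) :
    StronglyMonotone ε fun u : K => (⟨F (x u), hFx u⟩ : K) := by
  intro u v
  set w := x u - x v - (u - v : E)
  have hw : w ∈ Kᗮ := by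
    convert Kᗮ.sub_mem (hx u) (hx v) using 1
    simp only [w]
    abel
  have hsplit : x u - x v = (u - v : E) + w := by simp only [w]; abel
  have hnorm : ‖(u - v : E)‖ ^ 2 ≤ ‖x u - x v‖ ^ 2 := by
    rw [hsplit, sq, sq, norm_add_sq_eq_norm_sq_add_norm_sq_real
      (K.inner_right_of_mem_orthogonal (K.sub_mem u.2 v.2) hw)]
    nlinarith [norm_nonneg w]
  have hinner : ⟪x u - x v, F (x u) - F (x v)⟫ = ⟪(u - v : E), F (x u) - F (x v)⟫ := by
    rw [hsplit, inner_add_left, K.inner_left_of_mem_orthogonal (K.sub_mem (hFx u) (hFx v)) hw,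
      add_zero]
  calc ε * ‖u - v‖ ^ 2 = ε * ‖(u - v : E)‖ ^ 2 := rfl
    _ ≤ ε * ‖x u - x v‖ ^ 2 := by gcongr
    _ ≤ ⟪x u - x v, F (x u) - F (x v)⟫ := hF _ _
    _ = _ := hinner

end StronglyMonotone

theorem exists_continuous_zero_of_stronglyMonotone {X : Type*} [TopologicalSpace X] {ε : ℝ}
    {f : X → ℝ → ℝ} (hf : ∀ u, StronglyMonotone ε (f u)) (hε : 0 < ε)
    (hcont : ∀ u, Continuous (f u)) (hcont' : ∀ t, Continuous fun u => f u t) :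
    ∃ τ : X → ℝ, Continuous τ ∧ ∀ u, f u (τ u) = 0 := by
  choose τ hτ using fun u => (hf u).exists_eq_zero_of_real hε (hcont u)
  refine ⟨τ, continuous_iff_continuousAt.mpr fun u => ?_, hτ⟩
  have hbound : ∀ v, dist (τ v) (τ u) ≤ |f v (τ u)| / ε := fun v => by
    rw [le_div_iff₀ hε, Real.dist_eq, mul_comm]
    simpa [hτ v] using (hf v).mul_norm_sub_le (τ v) (τ u)
  have hlim : Tendsto (fun v => |f v (τ u)| / ε) (𝓝 u) (𝓝 0) := by
    simpa [hτ u] using ((hcont' (τ u)).abs.div_const ε).tendsto u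
  exact tendsto_iff_dist_tendsto_zero.mpr (squeeze_zero (fun _ => dist_nonneg) hbound hlim)

open Submodule in
theorem StronglyMonotone.exists_eq_zero {E : Type*} [NormedAddCommGroup E]
    [InnerProductSpace ℝ E] [FiniteDimensional ℝ E] {ε : ℝ} {F : E → E}
    (hF : StronglyMonotone ε F) (hε : 0 < ε) (hc : Continuous F) : ∃ x, F x = 0 := by
  induction h : finrank ℝ E generalizing E with
  | zero =>
    have := finrank_zero_iff.mp h
    exact ⟨0, Subsingleton.elim _ _⟩
  | succ n ih =>
    have : Nontrivial E := nontrivial_of_finrank_eq_succ h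
    have : Fact (finrank ℝ E = n + 1) := ⟨h⟩
    obtain ⟨e, he⟩ := exists_norm_eq E zero_le_one
    have he0 : e ≠ 0 := norm_ne_zero_iff.mp (he ▸ one_ne_zero)
    set K := (ℝ ∙ e)ᗮ
    obtain ⟨τ, hτc, hτ⟩ := exists_continuous_zero_of_stronglyMonotone (X := K)
      (fun u => hF.slice he u) hε (fun u => by fun_prop) (fun t => by fun_prop)
    set x : K → E := fun u => u + τ u • e
    have hx : ∀ u, x u - u ∈ Kᗮ := fun u => by
      simpa [x] using Kᗮ.smul_mem (τ u) (le_orthogonal_orthogonal _ (mem_span_singleton_self e))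
    have hFx : ∀ u, F (x u) ∈ K := fun u => mem_orthogonal_singleton_iff_inner_right.mpr (hτ u)
    obtain ⟨u, hu⟩ :=
      ih (hF.restrict hε.le x hx hFx) (by fun_prop) (finrank_orthogonal_span_singleton he0)
    exact ⟨x u, congrArg Subtype.val hu⟩

/-- A continuous, `ε`-strongly monotone map `F : ℝⁿ → ℝⁿ`
(`ε > 0`) has exactly one zero. -/
theorem strongly_monotone_unique_zero
    (n : ℕ) (F : EuclideanSpace ℝ (Fin n) → EuclideanSpace ℝ (Fin n))
    (hcont : Continuous F) (ε : ℝ) (hε : 0 < ε)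
    (hmono : ∀ x y, ε * ‖x - y‖ ^ 2 ≤ ⟪x - y, F x - F y⟫) :
    ∃! xstar : EuclideanSpace ℝ (Fin n), F xstar = 0 := by
  have hF : StronglyMonotone ε F := hmono
  obtain ⟨x, hx⟩ := hF.exists_eq_zero hε hcont
  exact ⟨x, hx, fun y hy => hF.injective hε (hy.trans hx.symm)⟩
end

section
/- (Proposition 1.) Under the game setup, assume the pseudo-gradient F is ε-strongly monotone for some ε > 0 and that x* ∈ E satisfies F(x*) = 0. Let L be an N×N real matrix with L·1_N = 0, 1_Nᵀ·L = 0, and whose kernel is exactly the span of 1_N (as holds for the ω-rescaled Laplacian of a strongly connected digraph). Let κ > 0 and suppose the stacked vector X = (X_1,…,X_N) ∈ E^N satisfies, for every i, 0 = −ι_i(F_i(X_i)) − κ Σ_j L_{ij} X_j. Then X_i = x* for every i; that is, all players' estimate vectors coincide and equal the Nash equilibrium x*, and in particular each player's own action component equals its equilibrium action. -/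
/-!
Summing the equilibrium equations over the players kills the coupling term, because the columns
of `L` sum to zero; the blocks `ι_i (F_i X_i)` occupy disjoint coordinates, so every `F_i (X_i)`
vanishes. The remaining equations say that `L` annihilates every coordinate of the stacked
estimate, which forces consensus, and at a consensus point `F` vanishes. Strong monotonicity makes
the zero of `F` unique.
-/

open scoped RealInnerProductSpace

noncomputable section

/-- The profile space `E = E_1 × ⋯ × E_N` with the product (ℓ²) inner product,
where `E_i = ℝ^{n i}`. -/
abbrev GSpace {N : ℕ} (n : Fin N → ℕ) : Type :=
  PiLp 2 (fun j : Fin N => EuclideanSpace ℝ (Fin (n j)))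

/-- `ι_i`: the linear embedding of `E_i` into `E` placing a vector in the `i`-th
block and zero elsewhere. -/
def blockEmb {N : ℕ} (n : Fin N → ℕ) (i : Fin N)
    (z : EuclideanSpace ℝ (Fin (n i))) : GSpace n :=
  WithLp.toLp 2 (Pi.single i z)

theorem eq_of_stronglyMonotone_of_apply_eq_zero {E : Type*} [NormedAddCommGroup E]
    [InnerProductSpace ℝ E] {f : E → E} {ε : ℝ} (hε : 0 < ε)
    (hf : ∀ x y, ε * ‖x - y‖ ^ 2 ≤ ⟪x - y, f x - f y⟫) {x y : E}
    (hx : f x = 0) (hy : f y = 0) : x = y := by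
  have h := hf x y
  rw [hx, hy, sub_zero, inner_zero_right] at h
  have : ‖x - y‖ ^ 2 = 0 := le_antisymm (nonpos_of_mul_nonpos_right h hε) (sq_nonneg _)
  simpa [sub_eq_zero] using this

theorem Matrix.sum_sum_smul_eq_zero_of_one_vecMul_eq_zero {ι R M : Type*} [Fintype ι]
    [Semiring R] [AddCommMonoid M] [Module R M] {L : Matrix ι ι R}
    (hL : Matrix.vecMul (fun _ => 1) L = 0) (X : ι → M) :
    ∑ i, ∑ j, L i j • X j = 0 := by
  rw [Finset.sum_comm]
  refine Finset.sum_eq_zero fun j _ => ?_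
  have hcol : ∑ i, L i j = 0 := by simpa [Matrix.vecMul, dotProduct] using congrFun hL j
  rw [← Finset.sum_smul, hcol, zero_smul]

theorem Matrix.eq_of_sum_smul_eq_zero_of_ker_le_const {ι K V : Type*} [Fintype ι] [Field K]
    [AddCommGroup V] [Module K V] {L : Matrix ι ι K}
    (hker : ∀ v : ι → K, L.mulVec v = 0 → ∃ c : K, v = fun _ => c)
    {X : ι → V} (hX : ∀ i, ∑ j, L i j • X j = 0) (i j : ι) : X i = X j := by
  rw [← sub_eq_zero, ← Module.forall_dual_apply_eq_zero_iff K]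
  intro φ
  obtain ⟨c, hc⟩ := hker (fun k => φ (X k)) <| funext fun k => by
    simpa [Matrix.mulVec, dotProduct, map_sum] using congrArg φ (hX k)
  simp [congrFun hc i, congrFun hc j]

theorem blockEmb_sum_apply {N : ℕ} (n : Fin N → ℕ) (z : ∀ i, EuclideanSpace ℝ (Fin (n i)))
    (k : Fin N) : (∑ i, blockEmb n i (z i)) k = z k := by
  simp [blockEmb, WithLp.ofLp_sum, Finset.sum_apply]

theorem equilibrium_of_augmented_dynamics_is_NE_general
    (N : ℕ) (n : Fin N → ℕ)
    (Fp : ∀ i : Fin N, GSpace n → EuclideanSpace ℝ (Fin (n i)))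
    (F : GSpace n → GSpace n) (hFdef : ∀ x i, F x i = Fp i x)
    (ε : ℝ) (hε : 0 < ε)
    (hmono : ∀ x y : GSpace n, ε * ‖x - y‖ ^ 2 ≤ ⟪x - y, F x - F y⟫)
    (xstar : GSpace n) (hstar : F xstar = 0)
    (L : Matrix (Fin N) (Fin N) ℝ)
    (hL2 : Matrix.vecMul (fun _ => 1) L = 0)
    (hker : ∀ v : Fin N → ℝ, L.mulVec v = 0 → ∃ c : ℝ, v = fun _ => c)
    (κ : ℝ) (hκ : 0 < κ)
    (X : Fin N → GSpace n)
    (heq : ∀ i, (0 : GSpace n) =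
      -blockEmb n i (Fp i (X i)) - κ • ∑ j, L i j • X j) :
    ∀ i, X i = xstar := by
  have hbal : ∀ i, blockEmb n i (Fp i (X i)) + κ • ∑ j, L i j • X j = 0 := fun i => by
    rw [← neg_eq_zero, neg_add, ← sub_eq_add_neg, heq i]
  have hFp : ∀ i, Fp i (X i) = 0 := fun i => by
    have hsum := Finset.sum_eq_zero (s := Finset.univ) fun i _ => hbal i
    rw [Finset.sum_add_distrib, ← Finset.smul_sum,
      L.sum_sum_smul_eq_zero_of_one_vecMul_eq_zero hL2, smul_zero, add_zero] at hsum
    simpa only [blockEmb_sum_apply, PiLp.zero_apply] using congrArg (· i) hsum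
  have hcons : ∀ i j, X i = X j := L.eq_of_sum_smul_eq_zero_of_ker_le_const hker fun i => by
    simpa [hFp i, blockEmb, hκ.ne'] using hbal i
  intro i
  refine eq_of_stronglyMonotone_of_apply_eq_zero hε hmono ?_ hstar
  ext k : 1
  rw [hFdef, hcons i k, hFp k]
  rfl

/-- **Proposition 1.** If the pseudo-gradient `F` is `ε`-strongly
monotone with zero `x*`, `L` is an `N×N` matrix with `L·1 = 0`, `1ᵀL = 0` and kernel
exactly the span of `1`, `κ > 0`, and the stacked vector `X` satisfies
`0 = −ι_i(F_i(X_i)) − κ Σ_j L_{ij} X_j` for all `i`, then `X_i = x*` for all `i`. -/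
theorem equilibrium_of_augmented_dynamics_is_NE
    (N : ℕ) (hN : 1 ≤ N) (n : Fin N → ℕ)
    (Fp : ∀ i : Fin N, GSpace n → EuclideanSpace ℝ (Fin (n i)))
    (F : GSpace n → GSpace n) (hFdef : ∀ x i, F x i = Fp i x)
    (ε : ℝ) (hε : 0 < ε)
    (hmono : ∀ x y : GSpace n, ε * ‖x - y‖ ^ 2 ≤ ⟪x - y, F x - F y⟫)
    (xstar : GSpace n) (hstar : F xstar = 0)
    (L : Matrix (Fin N) (Fin N) ℝ)
    (hL1 : L.mulVec (fun _ => 1) = 0)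
    (hL2 : Matrix.vecMul (fun _ => 1) L = 0)
    (hker : ∀ v : Fin N → ℝ, L.mulVec v = 0 → ∃ c : ℝ, v = fun _ => c)
    (κ : ℝ) (hκ : 0 < κ)
    (X : Fin N → GSpace n)
    (heq : ∀ i, (0 : GSpace n) =
      -blockEmb n i (Fp i (X i)) - κ • ∑ j, L i j • X j) :
    ∀ i, X i = xstar :=
  equilibrium_of_augmented_dynamics_is_NE_general N n Fp F hFdef ε hε hmono xstar hstar L hL2 hker κ
    hκ X heq
end
end

section
/- Under the game setup, assume: the pseudo-gradient F is ε-strongly monotone (ε > 0) and ι-Lipschitz, each partial-gradient map F_i : E → E_i is ι-Lipschitz, and x* ∈ E satisfies F(x*) = 0. Let L be an N×N real matrix with L·1_N = 0 and 1_Nᵀ·L = 0, and suppose λ₂ > 0 satisfies vᵀ((L+Lᵀ)/2)v ≥ λ₂‖v‖² for every v ∈ ℝ^N with Σ_i v_i = 0. Let X̃ ∈ E^N be the stacked vector with X̃_i = x* for all i, and for X ∈ E^N define G(X)_i = −ι_i(F_i(X_i)) − κ Σ_j L_{ij} X_j. If κ > (ι²/ε + ι)/λ₂, then there exists λ > 0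 (depending only on ε, ι, λ₂, κ, N) such that for every X ∈ E^N: ⟨X − X̃, G(X)⟩ ≤ −λ ‖X − X̃‖². -/
open Matrix
open scoped RealInnerProductSpace

noncomputable section

/-- The stacked space `E^N` with the product (ℓ²) inner product. -/
abbrev Stacked {N : ℕ} (n : Fin N → ℕ) : Type :=
  PiLp 2 (fun _ : Fin N => GSpace n)

/-!
Write `X i - x⋆ = ȳ + W i`, where `ȳ` is the average deviation and `∑ i, W i = 0`, so that
`‖X - X̃‖² = N ‖ȳ‖² + ‖W‖²`. Because `L` has zero row and column sums, the consensus term only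
sees `W`, and applying the spectral gap in each coordinate of an orthonormal basis bounds it
below by `κ λ₂ ‖W‖²`. Comparing each `F_i (X i)` with `F_i (x⋆ + ȳ)` through strong monotonicity
and the two Lipschitz bounds gives `ε ‖ȳ‖² - 2 ι ‖ȳ‖ ‖W‖ - ι ‖W‖²` for the gradient term. The
condition on `κ` says `ι² < ε (κ λ₂ - ι)`, i.e. the resulting quadratic form in `(‖ȳ‖, ‖W‖)` is
positive definite.
-/

theorem PiLp.norm_le_mul_norm_of_forall {ι : Type*} [Fintype ι] {α β : ι → Type*}
    [∀ i, SeminormedAddCommGroup (α i)] [∀ i, SeminormedAddCommGroup (β i)]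
    {x : PiLp 2 α} {y : PiLp 2 β} {c : ℝ} (hc : 0 ≤ c) (h : ∀ i, ‖x i‖ ≤ c * ‖y i‖) :
    ‖x‖ ≤ c * ‖y‖ := by
  refine le_of_sq_le_sq ?_ (by positivity)
  rw [mul_pow, PiLp.norm_sq_eq_of_L2, PiLp.norm_sq_eq_of_L2, Finset.mul_sum]
  gcongr with i
  rw [← mul_pow]
  exact pow_le_pow_left₀ (norm_nonneg _) (h i) 2

theorem Matrix.dotProduct_half_add_transpose_mulVec {ι : Type*} [Fintype ι] (L : Matrix ι ι ℝ)
    (v : ι → ℝ) :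
    v ⬝ᵥ ((2 : ℝ)⁻¹ • (L + Lᵀ)) *ᵥ v = v ⬝ᵥ L *ᵥ v := by
  have : v ⬝ᵥ Lᵀ *ᵥ v = v ⬝ᵥ L *ᵥ v := by
    rw [dotProduct_mulVec, vecMul_transpose, dotProduct_comm]
  rw [smul_mulVec, add_mulVec, dotProduct_smul, dotProduct_add, this, smul_eq_mul]
  ring

section Laplacian

variable {ι E : Type*} [Fintype ι] [NormedAddCommGroup E] [InnerProductSpace ℝ E]

theorem sum_inner_smul_sum_add_const {L : Matrix ι ι ℝ} (hrow : ∀ i, ∑ j, L i j = 0)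
    (hcol : ∀ j, ∑ i, L i j = 0) (c : E) (W : ι → E) :
    ∑ i, ⟪c + W i, ∑ j, L i j • (c + W j)⟫ = ∑ i, ⟪W i, ∑ j, L i j • W j⟫ := by
  have hshift : ∀ i, ∑ j, L i j • (c + W j) = ∑ j, L i j • W j := fun i => by
    simp only [smul_add, Finset.sum_add_distrib, ← Finset.sum_smul, hrow, zero_smul, zero_add]
  have hc : ∑ i, ⟪c, ∑ j, L i j • W j⟫ = 0 := by
    rw [← inner_sum, Finset.sum_comm]
    simp only [← Finset.sum_smul, hcol, zero_smul, Finset.sum_const_zero, inner_zero_right]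
  simp only [hshift, inner_add_left, Finset.sum_add_distrib, hc, zero_add]

theorem le_sum_inner_smul_sum_of_sum_eq_zero [FiniteDimensional ℝ E] {L : Matrix ι ι ℝ}
    {lam : ℝ} (hgap : ∀ v : ι → ℝ, ∑ i, v i = 0 → lam * (v ⬝ᵥ v) ≤ v ⬝ᵥ L *ᵥ v)
    {W : ι → E} (hW : ∑ i, W i = 0) :
    lam * ∑ i, ‖W i‖ ^ 2 ≤ ∑ i, ⟪W i, ∑ j, L i j • W j⟫ := by
  let b := stdOrthonormalBasis ℝ E
  let w : Fin (Module.finrank ℝ E) → ι → ℝ := fun s i => ⟪b s, W i⟫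
  have hinner : ∀ x y : E, ⟪x, y⟫ = ∑ s, ⟪b s, x⟫ * ⟪b s, y⟫ := fun x y => by
    simp_rw [← b.sum_inner_mul_inner x y, real_inner_comm x]
  have hw : ∀ s, ∑ i, w s i = 0 := fun s => by
    simp only [w, ← inner_sum, hW, inner_zero_right]
  calc lam * ∑ i, ‖W i‖ ^ 2 = ∑ s, lam * (w s ⬝ᵥ w s) := by
        simp_rw [← real_inner_self_eq_norm_sq, hinner (W _), dotProduct, Finset.mul_sum]
        exact Finset.sum_comm
    _ ≤ ∑ s, w s ⬝ᵥ L *ᵥ w s := Finset.sum_le_sum fun s _ => hgap _ (hw s)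
    _ = ∑ i, ⟪W i, ∑ j, L i j • W j⟫ := by
        simp_rw [hinner (W _), inner_sum, real_inner_smul_right, dotProduct, mulVec, dotProduct,
          Finset.mul_sum]
        rw [Finset.sum_comm]

end Laplacian

theorem exists_pos_mul_sq_add_sq_le_of_sq_lt {p q r : ℝ} (hp : 0 < p) (hr : 0 < r)
    (hq : q ^ 2 < p * r) :
    ∃ μ > 0, ∀ a b : ℝ, μ * (a ^ 2 + b ^ 2) ≤ p * a ^ 2 - 2 * q * a * b + r * b ^ 2 := by
  -- With this `μ`, `(p - μ) * (r - μ) ≥ p * r - μ * (p + r) = q ^ 2`.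
  refine ⟨(p * r - q ^ 2) / (p + r), by apply div_pos <;> linarith, fun a b => ?_⟩
  set μ := (p * r - q ^ 2) / (p + r) with hμ
  have hμdef : μ * (p + r) = p * r - q ^ 2 := by rw [hμ]; field_simp
  have hpμ : 0 < p - μ := by
    rw [hμ, sub_pos, div_lt_iff₀ (by linarith)]; nlinarith
  have hdet : q ^ 2 ≤ (p - μ) * (r - μ) := by nlinarith [sq_nonneg μ]
  have hform : 0 ≤ (p - μ) * ((p - μ) * a ^ 2 - 2 * q * a * b + (r - μ) * b ^ 2) := by
    nlinarith [sq_nonneg ((p - μ) * a - q * b), sq_nonneg b]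
  nlinarith [(mul_nonneg_iff_of_pos_left hpμ).mp hform]

theorem sum_sub_average_eq_zero {ι E : Type*} [Fintype ι] [AddCommGroup E] [Module ℝ E]
    (Z : ι → E) : ∑ i, (Z i - (Fintype.card ι : ℝ)⁻¹ • ∑ j, Z j) = 0 := by
  rcases isEmpty_or_nonempty ι with hι | hι
  · simp
  rw [Finset.sum_sub_distrib, Finset.sum_const, Finset.card_univ, ← Nat.cast_smul_eq_nsmul ℝ,
    smul_smul, mul_inv_cancel₀ (by positivity), one_smul, sub_self]

theorem sum_norm_add_sq_of_sum_eq_zero {ι E : Type*} [Fintype ι] [NormedAddCommGroup E]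
    [InnerProductSpace ℝ E] (c : E) {W : ι → E} (hW : ∑ i, W i = 0) :
    ∑ i, ‖c + W i‖ ^ 2 = Fintype.card ι * ‖c‖ ^ 2 + ∑ i, ‖W i‖ ^ 2 := by
  simp only [norm_add_sq_real, Finset.sum_add_distrib, ← Finset.mul_sum, ← inner_sum, hW,
    inner_zero_right, mul_zero, add_zero, Finset.sum_const, Finset.card_univ, nsmul_eq_mul]

section Game

variable {N : ℕ} {n : Fin N → ℕ}

theorem inner_blockEmb (y : GSpace n) (i : Fin N) (z : EuclideanSpace ℝ (Fin (n i))) :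
    ⟪y, blockEmb n i z⟫ = ⟪y i, z⟫ := by
  rw [PiLp.inner_apply, Finset.sum_eq_single i (fun k _ hk => by simp [blockEmb, hk])
    (by simp)]
  simp [blockEmb]

theorem inner_sub_const_augmentedField
    {Fp : ∀ i : Fin N, GSpace n → EuclideanSpace ℝ (Fin (n i))}
    {L : Matrix (Fin N) (Fin N) ℝ} (hrow : ∀ i, ∑ j, L i j = 0) {κ : ℝ}
    {G : Stacked n → Stacked n}
    (hG : ∀ X i, G X i = -blockEmb n i (Fp i (X i)) - κ • ∑ j, L i j • X j)
    {xstar : GSpace n} {Xt : Stacked n} (hXt : ∀ i, Xt i = xstar) (X : Stacked n) :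
    ⟪X - Xt, G X⟫ = -∑ i, ⟪(X i - xstar) i, Fp i (X i)⟫
      - κ * ∑ i, ⟪X i - xstar, ∑ j, L i j • (X j - xstar)⟫ := by
  have hshift : ∀ i, ∑ j, L i j • (X j - xstar) = ∑ j, L i j • X j := fun i => by
    simp only [smul_sub, Finset.sum_sub_distrib, ← Finset.sum_smul, hrow, zero_smul, sub_zero]
  rw [PiLp.inner_apply]
  simp only [PiLp.sub_apply, hXt, hG, hshift, inner_sub_right, inner_neg_right,
    inner_blockEmb, inner_smul_right, inner_sum, Finset.sum_sub_distrib, Finset.sum_neg_distrib,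
    Finset.mul_sum]

theorem le_sum_inner_partialGradient
    {Fp : ∀ i : Fin N, GSpace n → EuclideanSpace ℝ (Fin (n i))} {F : GSpace n → GSpace n}
    (hFdef : ∀ x i, F x i = Fp i x) {ε ι : ℝ} (hι : 0 ≤ ι)
    (hmono : ∀ x y : GSpace n, ε * ‖x - y‖ ^ 2 ≤ ⟪x - y, F x - F y⟫)
    (hFLip : ∀ x y : GSpace n, ‖F x - F y‖ ≤ ι * ‖x - y‖)
    (hFpLip : ∀ i, ∀ x y : GSpace n, ‖Fp i x - Fp i y‖ ≤ ι * ‖x - y‖)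
    {xstar : GSpace n} (hstar : F xstar = 0) {X : Stacked n} {y : GSpace n} {W : Stacked n}
    (hX : ∀ i, X i - xstar = y + W i) :
    ε * ‖y‖ ^ 2 - 2 * ι * ‖y‖ * ‖W‖ - ι * ‖W‖ ^ 2 ≤ ∑ i, ⟪(X i - xstar) i, Fp i (X i)⟫ := by
  set xb := xstar + y
  have hXb : ∀ i, X i = xb + W i := fun i => by rw [add_assoc, ← hX, add_sub_cancel]
  let u : GSpace n := WithLp.toLp 2 fun i => W i i
  let R : GSpace n := WithLp.toLp 2 fun i => Fp i (X i) - Fp i xb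
  have hsplit : ∑ i, ⟪(X i - xstar) i, Fp i (X i)⟫ = ⟪y, F xb⟫ + ⟪u, F xb⟫ + ⟪y + u, R⟫ := by
    rw [← inner_add_left, ← inner_add_right, PiLp.inner_apply]
    simp [u, R, hX, hFdef]
  have hy : ε * ‖y‖ ^ 2 ≤ ⟪y, F xb⟫ := by simpa [xb, hstar] using hmono xb xstar
  have hFxb : ‖F xb‖ ≤ ι * ‖y‖ := by simpa [xb, hstar] using hFLip xb xstar
  have hu : ‖u‖ ≤ ‖W‖ := by
    simpa using PiLp.norm_le_mul_norm_of_forall (x := u) (y := W) zero_le_one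
      fun i => by simpa [u] using PiLp.norm_apply_le (W i) i
  have hR : ‖R‖ ≤ ι * ‖W‖ := PiLp.norm_le_mul_norm_of_forall hι fun i => by
    simpa [R, hXb] using hFpLip i (X i) xb
  have huF : -(‖W‖ * (ι * ‖y‖)) ≤ ⟪u, F xb⟫ := by
    refine (neg_le_neg ?_).trans (neg_le_of_abs_le (abs_real_inner_le_norm u (F xb)))
    exact mul_le_mul hu hFxb (norm_nonneg _) (norm_nonneg _)
  have hyuR : -((‖y‖ + ‖W‖) * (ι * ‖W‖)) ≤ ⟪y + u, R⟫ := by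
    refine (neg_le_neg ?_).trans (neg_le_of_abs_le (abs_real_inner_le_norm (y + u) R))
    exact mul_le_mul ((norm_add_le y u).trans (by linarith)) hR (norm_nonneg _) (by positivity)
  rw [hsplit]
  linarith

end Game

theorem augmented_field_strongly_dissipative_general
    (N : ℕ) (n : Fin N → ℕ)
    (Fp : ∀ i : Fin N, GSpace n → EuclideanSpace ℝ (Fin (n i)))
    (F : GSpace n → GSpace n) (hFdef : ∀ x i, F x i = Fp i x)
    (ε ι : ℝ) (hε : 0 < ε) (hι : 0 < ι)
    (hmono : ∀ x y : GSpace n, ε * ‖x - y‖ ^ 2 ≤ ⟪x - y, F x - F y⟫)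
    (hFLip : ∀ x y : GSpace n, ‖F x - F y‖ ≤ ι * ‖x - y‖)
    (hFpLip : ∀ i, ∀ x y : GSpace n, ‖Fp i x - Fp i y‖ ≤ ι * ‖x - y‖)
    (xstar : GSpace n) (hstar : F xstar = 0)
    (L : Matrix (Fin N) (Fin N) ℝ)
    (hL1 : L.mulVec (fun _ => 1) = 0)
    (hL2 : Matrix.vecMul (fun _ => 1) L = 0)
    (lam₂ : ℝ) (hlam₂ : 0 < lam₂)
    (hgap : ∀ v : Fin N → ℝ, ∑ i, v i = 0 →
      lam₂ * (v ⬝ᵥ v) ≤ v ⬝ᵥ ((((2:ℝ)⁻¹) • (L + Lᵀ)).mulVec v))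
    (κ : ℝ) (hκ : κ > (ι ^ 2 / ε + ι) / lam₂)
    (Xt : Stacked n) (hXt : ∀ i, Xt i = xstar)
    (G : Stacked n → Stacked n)
    (hG : ∀ X i, G X i = -blockEmb n i (Fp i (X i)) - κ • ∑ j, L i j • X j) :
    ∃ lam > 0, ∀ X : Stacked n, ⟪X - Xt, G X⟫ ≤ -lam * ‖X - Xt‖ ^ 2 := by
  have hcoupling : ι ^ 2 / ε < κ * lam₂ - ι := by
    linarith [(div_lt_iff₀ hlam₂).mp hκ]
  have hκ0 : 0 ≤ κ := (div_pos (by positivity) hlam₂).le.trans hκ.le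
  obtain ⟨μ, hμ, hquad⟩ := exists_pos_mul_sq_add_sq_le_of_sq_lt hε
    ((div_pos (by positivity) hε).trans hcoupling) ((div_lt_iff₀' hε).mp hcoupling)
  have hrow : ∀ i, ∑ j, L i j = 0 := fun i => by
    simpa [Matrix.mulVec, dotProduct] using congrFun hL1 i
  have hcol : ∀ j, ∑ i, L i j = 0 := fun j => by
    simpa [Matrix.vecMul, dotProduct] using congrFun hL2 j
  refine ⟨μ / (N + 1), by positivity, fun X => ?_⟩
  set y : GSpace n := (Fintype.card (Fin N) : ℝ)⁻¹ • ∑ i, (X i - xstar)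
  set W : Stacked n := WithLp.toLp 2 fun i => X i - xstar - y
  have hX : ∀ i, X i - xstar = y + W i := fun i => by simp [W]
  have hW : ∑ i, W i = 0 := sum_sub_average_eq_zero fun i => X i - xstar
  have hnorm : ‖X - Xt‖ ^ 2 = N * ‖y‖ ^ 2 + ‖W‖ ^ 2 := by
    simpa [PiLp.norm_sq_eq_of_L2 _ (X - Xt), PiLp.norm_sq_eq_of_L2 _ W, hXt, hX] using
      sum_norm_add_sq_of_sum_eq_zero y hW
  have hgrad := le_sum_inner_partialGradient hFdef hι.le hmono hFLip hFpLip hstar hX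
  have hlap : lam₂ * ‖W‖ ^ 2 ≤ ∑ i, ⟪X i - xstar, ∑ j, L i j • (X j - xstar)⟫ := by
    simp only [hX, sum_inner_smul_sum_add_const hrow hcol, PiLp.norm_sq_eq_of_L2 _ W]
    exact le_sum_inner_smul_sum_of_sum_eq_zero
      (fun v hv => (hgap v hv).trans_eq (Matrix.dotProduct_half_add_transpose_mulVec L v)) hW
  have hscale : μ / (N + 1) * (N * ‖y‖ ^ 2 + ‖W‖ ^ 2) ≤ μ * (‖y‖ ^ 2 + ‖W‖ ^ 2) := by
    rw [div_mul_eq_mul_div, div_le_iff₀ (by positivity)]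
    linarith [mul_nonneg hμ.le (sq_nonneg ‖y‖),
      mul_nonneg (mul_nonneg hμ.le (Nat.cast_nonneg N)) (sq_nonneg ‖W‖)]
  rw [inner_sub_const_augmentedField hrow hG hXt, hnorm]
  linarith [hquad ‖y‖ ‖W‖, mul_le_mul_of_nonneg_left hlap hκ0]

/-- Under strong monotonicity and Lipschitz assumptions on the
pseudo-gradient, a spectral-gap condition on `(L+Lᵀ)/2` over sum-zero vectors, and
`κ > (ι²/ε + ι)/λ₂`, the augmented gradient field `G` satisfies a strong
one-sided dissipativity bound `⟨X − X̃, G(X)⟩ ≤ −λ‖X − X̃‖²` for some `λ > 0`. -/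
theorem augmented_field_strongly_dissipative
    (N : ℕ) (hN : 1 ≤ N) (n : Fin N → ℕ)
    (Fp : ∀ i : Fin N, GSpace n → EuclideanSpace ℝ (Fin (n i)))
    (F : GSpace n → GSpace n) (hFdef : ∀ x i, F x i = Fp i x)
    (ε ι : ℝ) (hε : 0 < ε) (hι : 0 < ι)
    (hmono : ∀ x y : GSpace n, ε * ‖x - y‖ ^ 2 ≤ ⟪x - y, F x - F y⟫)
    (hFLip : ∀ x y : GSpace n, ‖F x - F y‖ ≤ ι * ‖x - y‖)
    (hFpLip : ∀ i, ∀ x y : GSpace n, ‖Fp i x - Fp i y‖ ≤ ι * ‖x - y‖)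
    (xstar : GSpace n) (hstar : F xstar = 0)
    (L : Matrix (Fin N) (Fin N) ℝ)
    (hL1 : L.mulVec (fun _ => 1) = 0)
    (hL2 : Matrix.vecMul (fun _ => 1) L = 0)
    (lam₂ : ℝ) (hlam₂ : 0 < lam₂)
    (hgap : ∀ v : Fin N → ℝ, ∑ i, v i = 0 →
      lam₂ * (v ⬝ᵥ v) ≤ v ⬝ᵥ ((((2:ℝ)⁻¹) • (L + Lᵀ)).mulVec v))
    (κ : ℝ) (hκ : κ > (ι ^ 2 / ε + ι) / lam₂)
    (Xt : Stacked n) (hXt : ∀ i, Xt i = xstar)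
    (G : Stacked n → Stacked n)
    (hG : ∀ X i, G X i = -blockEmb n i (Fp i (X i)) - κ • ∑ j, L i j • X j) :
    ∃ lam > 0, ∀ X : Stacked n, ⟪X - Xt, G X⟫ ≤ -lam * ‖X - Xt‖ ^ 2 :=
  augmented_field_strongly_dissipative_general N n Fp F hFdef ε ι hε hι hmono hFLip hFpLip xstar
    hstar L hL1 hL2 lam₂ hlam₂ hgap κ hκ Xt hXt G hG
end
end

section
/- (Corollary 1: exponential NE seeking without attacks.) Under the game setup, assume: the pseudo-gradient F is ε-strongly monotone (ε > 0) and ι-Lipschitz, each partial-gradient map F_i : E → E_i is ι-Lipschitz, and x* ∈ E satisfies F(x*) = 0. Let L be an N×N real matrix with L·1_N = 0 and 1_Nᵀ·L = 0, and suppose λ₂ > 0 satisfies vᵀ((L+Lᵀ)/2)v ≥ λ₂‖v‖² for every v ∈ ℝ^N with Σ_i v_i = 0. Let X̃_i = x* for all i, G(X)_i = −ι_i(F_i(X_i)) − κ Σ_j L_{ij} X_j, and assume κ > (ι²/ε + ι)/λ₂. Then there exists λ > 0 such that every differentiable curve x : [t₀,∞) → E^N satisfying x′(t) = G(x(t)) for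 all t ≥ t₀ obeys ‖x(t) − X̃‖ ≤ e^{−λ(t−t₀)} ‖x(t₀) − X̃‖ for all t ≥ t₀; in particular every player's estimate converges exponentially to the Nash equilibrium x* from any initial condition. -/
/-!
Let `x̂` be the mean of the players' estimates, `p = ‖x̂ - x*‖` and `q = ‖X - (x̂, …, x̂)‖` the
size of the disagreement. The error splits orthogonally, `‖X - X̃‖² = N p² + q²`. Since `L` has
zero row and column sums, the Laplacian term only sees the disagreement and contributes at most
`-κ λ₂ q²`; strong monotonicity at `x̂` and the Lipschitz bounds make the gradient term at most
`-(ε p² - 2ι p q - ι q²)`. As `ι² < ε (κ λ₂ - ι)`, the resulting quadratic form in `(p, q)` is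
positive definite, so `⟪X - X̃, G X⟫ ≤ -λ ‖X - X̃‖²` for some `λ > 0`, and then
`e^{2λt} ‖x(t) - X̃‖²` is nonincreasing along every solution.
-/

open Matrix
open scoped RealInnerProductSpace

noncomputable section

theorem exists_pos_mul_sq_add_sq_le {a b d : ℝ} (ha : 0 < a) (h : b ^ 2 < a * d) :
    ∃ c > 0, ∀ p q : ℝ, c * (p ^ 2 + q ^ 2) ≤ a * p ^ 2 - 2 * b * p * q + d * q ^ 2 := by
  have hd : 0 < d := pos_of_mul_pos_right ((sq_nonneg b).trans_lt h) ha.le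
  set c := min (a / 2) ((a * d - b ^ 2) / (a + d))
  have hc : c * (a + d) ≤ a * d - b ^ 2 :=
    (le_div_iff₀ (by positivity)).mp (min_le_right _ _)
  have hac : 0 < a - c := by linarith [min_le_left (a / 2) ((a * d - b ^ 2) / (a + d))]
  refine ⟨c, lt_min (by positivity) (div_pos (by linarith) (by positivity)), fun p q ↦ ?_⟩
  -- the choice of `c` keeps the discriminant of the shifted form nonpositive
  have hdisc : b ^ 2 ≤ (a - c) * (d - c) := by nlinarith [sq_nonneg c]
  have hshift : 0 ≤ (a - c) * ((a - c) * p ^ 2 - 2 * b * p * q + (d - c) * q ^ 2) := by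
    nlinarith [sq_nonneg ((a - c) * p - b * q), mul_nonneg (sub_nonneg.2 hdisc) (sq_nonneg q)]
  linarith [nonneg_of_mul_nonneg_right hshift hac]

theorem norm_sub_le_exp_mul_of_inner_deriv_le {E : Type*} [NormedAddCommGroup E]
    [InnerProductSpace ℝ E] {x x' : ℝ → E} {a : E} {c t₀ t : ℝ}
    (hx : ∀ s, t₀ ≤ s → HasDerivAt x (x' s) s)
    (hdiss : ∀ s, t₀ ≤ s → ⟪x s - a, x' s⟫ ≤ -c * ‖x s - a‖ ^ 2) (ht : t₀ ≤ t) :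
    ‖x t - a‖ ≤ Real.exp (-c * (t - t₀)) * ‖x t₀ - a‖ := by
  set φ : ℝ → ℝ := fun s ↦ Real.exp (2 * c * (s - t₀)) * ‖x s - a‖ ^ 2
  have hφ : ∀ s, t₀ ≤ s → HasDerivAt φ (Real.exp (2 * c * (s - t₀)) *
      (2 * c * ‖x s - a‖ ^ 2 + 2 * ⟪x s - a, x' s⟫)) s := by
    intro s hs
    have hexp := ((hasDerivAt_id s).sub_const t₀ |>.const_mul (2 * c)).exp
    exact (hexp.mul ((hx s hs).sub_const a).norm_sq).congr_deriv (by simp only [id]; ring)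
  have hanti : AntitoneOn φ (Set.Ici t₀) := by
    refine antitoneOn_of_hasDerivWithinAt_nonpos (convex_Ici t₀)
      (fun s hs ↦ (hφ s hs).continuousAt.continuousWithinAt)
      (fun s hs ↦ (hφ s (interior_subset hs)).hasDerivWithinAt) fun s hs ↦ ?_
    have hs := interior_subset hs
    nlinarith [hdiss s hs, Real.exp_pos (2 * c * (s - t₀))]
  have hdecay : Real.exp (2 * c * (t - t₀)) * ‖x t - a‖ ^ 2 ≤ ‖x t₀ - a‖ ^ 2 := by
    simpa [φ] using hanti Set.self_mem_Ici ht ht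
  refine le_of_sq_le_sq ?_ (by positivity)
  rw [mul_pow, ← Real.exp_nat_mul]
  calc ‖x t - a‖ ^ 2
      = Real.exp (↑2 * (-c * (t - t₀))) * (Real.exp (2 * c * (t - t₀)) * ‖x t - a‖ ^ 2) := by
        rw [← mul_assoc, ← Real.exp_add, show (↑2 : ℝ) * (-c * (t - t₀)) + 2 * c * (t - t₀) = 0 by
          ring, Real.exp_zero, one_mul]
    _ ≤ Real.exp (↑2 * (-c * (t - t₀))) * ‖x t₀ - a‖ ^ 2 := by gcongr

theorem neg_mul_le_real_inner_of_norm_le {E : Type*} [NormedAddCommGroup E]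
    [InnerProductSpace ℝ E] {u v : E} {a b : ℝ} (hu : ‖u‖ ≤ a) (hv : ‖v‖ ≤ b) :
    -(a * b) ≤ ⟪u, v⟫ :=
  (neg_le_neg (mul_le_mul hu hv (norm_nonneg v) ((norm_nonneg u).trans hu))).trans
    (neg_le_of_abs_le (abs_real_inner_le_norm u v))

theorem PiLp.norm_le_mul_of_forall_norm_apply_le {ι : Type*} [Fintype ι] {α β : ι → Type*}
    [∀ i, NormedAddCommGroup (α i)] [∀ i, NormedAddCommGroup (β i)] {x : PiLp 2 α}
    {y : PiLp 2 β} {c : ℝ} (hc : 0 ≤ c) (h : ∀ i, ‖x i‖ ≤ c * ‖y i‖) : ‖x‖ ≤ c * ‖y‖ := by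
  refine le_of_sq_le_sq ?_ (by positivity)
  rw [mul_pow, PiLp.norm_sq_eq_of_L2, PiLp.norm_sq_eq_of_L2, Finset.mul_sum]
  exact Finset.sum_le_sum fun i _ ↦ by
    rw [← mul_pow]; exact pow_le_pow_left₀ (norm_nonneg _) (h i) 2

theorem PiLp.norm_sub_const_sq_eq {ι V : Type*} [Fintype ι] [NormedAddCommGroup V]
    [InnerProductSpace ℝ V] (Y : PiLp 2 fun _ : ι ↦ V) (a : V) {m : V}
    (hm : ∑ i, (Y i - m) = 0) :
    ‖Y - WithLp.toLp 2 fun _ ↦ a‖ ^ 2 =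
      Fintype.card ι * ‖m - a‖ ^ 2 + ‖Y - WithLp.toLp 2 fun _ ↦ m‖ ^ 2 := by
  have hsplit : ∀ i, ‖Y i - a‖ ^ 2 = ‖m - a‖ ^ 2 + 2 * ⟪m - a, Y i - m⟫ + ‖Y i - m‖ ^ 2 :=
    fun i ↦ by rw [← norm_add_sq_real, sub_add_sub_cancel']
  simp only [PiLp.norm_sq_eq_of_L2, WithLp.ofLp_sub, Pi.sub_apply, hsplit,
    Finset.sum_add_distrib, ← Finset.mul_sum, ← inner_sum, hm, inner_zero_right, mul_zero,
    add_zero, Finset.sum_const, Finset.card_univ, nsmul_eq_mul]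

theorem sum_sub_card_inv_smul_sum_eq_zero {ι V : Type*} [Fintype ι] [Nonempty ι]
    [AddCommGroup V] [Module ℝ V] (Y : ι → V) :
    ∑ i, (Y i - (Fintype.card ι : ℝ)⁻¹ • ∑ j, Y j) = 0 := by
  rw [Finset.sum_sub_distrib, Finset.sum_const, Finset.card_univ, ← Nat.cast_smul_eq_nsmul ℝ,
    smul_smul, mul_inv_cancel₀ (Nat.cast_ne_zero.2 Fintype.card_ne_zero), one_smul, sub_self]

namespace Matrix

variable {ι : Type*} [Fintype ι]

theorem dotProduct_symmPart_mulVec (L : Matrix ι ι ℝ) (v : ι → ℝ) :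
    v ⬝ᵥ ((2 : ℝ)⁻¹ • (L + Lᵀ)) *ᵥ v = v ⬝ᵥ L *ᵥ v := by
  rw [smul_mulVec, add_mulVec, dotProduct_smul, dotProduct_add, mulVec_transpose,
    dotProduct_comm v (v ᵥ* L), ← dotProduct_mulVec, smul_eq_mul]
  ring

theorem sum_row_eq_zero_of_mulVec_one {L : Matrix ι ι ℝ} (h : L *ᵥ (fun _ ↦ 1) = 0) (i : ι) :
    ∑ j, L i j = 0 := by
  simpa [mulVec, dotProduct] using congrFun h i

theorem sum_col_eq_zero_of_vecMul_one {L : Matrix ι ι ℝ} (h : (fun _ ↦ 1) ᵥ* L = 0) (j : ι) :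
    ∑ i, L i j = 0 := by
  simpa [vecMul, dotProduct] using congrFun h j

variable {V : Type*} [NormedAddCommGroup V] [InnerProductSpace ℝ V]

theorem sum_sum_mul_inner_sub_sub {L : Matrix ι ι ℝ} (hrow : ∀ i, ∑ j, L i j = 0)
    (hcol : ∀ j, ∑ i, L i j = 0) (e : ι → V) (a : V) :
    ∑ i, ∑ j, L i j * ⟪e i - a, e j - a⟫ = ∑ i, ∑ j, L i j * ⟪e i, e j⟫ := by
  have hleft : ∀ i, ∑ j, L i j * ⟪e i - a, e j - a⟫ = ∑ j, L i j * ⟪e i - a, e j⟫ := fun i ↦ by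
    simp only [inner_sub_right, mul_sub, Finset.sum_sub_distrib, ← Finset.sum_mul, hrow,
      zero_mul, sub_zero]
  rw [Finset.sum_congr rfl fun i _ ↦ hleft i]
  simp only [inner_sub_left, mul_sub, Finset.sum_sub_distrib, sub_eq_self]
  rw [Finset.sum_comm]
  simp only [← Finset.sum_mul, hcol, zero_mul, Finset.sum_const_zero]

theorem mul_sum_norm_sq_le_sum_sum_mul_inner [FiniteDimensional ℝ V] {L : Matrix ι ι ℝ}
    {lam : ℝ} (hgap : ∀ v : ι → ℝ, ∑ i, v i = 0 → lam * (v ⬝ᵥ v) ≤ v ⬝ᵥ L *ᵥ v)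
    {d : ι → V} (hd : ∑ i, d i = 0) :
    lam * ∑ i, ‖d i‖ ^ 2 ≤ ∑ i, ∑ j, L i j * ⟪d i, d j⟫ := by
  let b := stdOrthonormalBasis ℝ V
  -- the scalar gap applies to each coordinate of `d` in an orthonormal basis
  let v : Fin (Module.finrank ℝ V) → ι → ℝ := fun k i ↦ ⟪d i, b k⟫
  have hv : ∀ k, ∑ i, v k i = 0 := fun k ↦ by simp [v, ← sum_inner, hd]
  have hinner : ∀ i j, ⟪d i, d j⟫ = ∑ k, v k i * v k j := fun i j ↦ by
    simp only [v, ← b.sum_inner_mul_inner (d i) (d j), real_inner_comm (b _) (d j)]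
  calc lam * ∑ i, ‖d i‖ ^ 2 = ∑ k, lam * (v k ⬝ᵥ v k) := by
        simp only [← real_inner_self_eq_norm_sq, hinner, dotProduct, Finset.mul_sum]
        exact Finset.sum_comm
    _ ≤ ∑ k, v k ⬝ᵥ L *ᵥ v k := Finset.sum_le_sum fun k _ ↦ hgap (v k) (hv k)
    _ = ∑ i, ∑ j, L i j * ⟪d i, d j⟫ := by
        simp only [hinner, dotProduct, mulVec, Finset.mul_sum]
        rw [Finset.sum_comm]
        refine Finset.sum_congr rfl fun i _ ↦ ?_
        rw [Finset.sum_comm]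
        exact Finset.sum_congr rfl fun j _ ↦ Finset.sum_congr rfl fun k _ ↦ by ring

end Matrix

section Game

variable {N : ℕ} {n : Fin N → ℕ}

def ownActions (X : Stacked n) : GSpace n := WithLp.toLp 2 fun i ↦ X i i

def extendedPseudoGrad (Fp : ∀ i : Fin N, GSpace n → EuclideanSpace ℝ (Fin (n i)))
    (X : Stacked n) : GSpace n :=
  WithLp.toLp 2 fun i ↦ Fp i (X i)

theorem ownActions_sub (X Y : Stacked n) : ownActions (X - Y) = ownActions X - ownActions Y :=
  rfl

theorem ownActions_const (x : GSpace n) : ownActions (WithLp.toLp 2 fun _ ↦ x) = x := rfl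

theorem norm_ownActions_le (X : Stacked n) : ‖ownActions X‖ ≤ ‖X‖ := by
  simpa using PiLp.norm_le_mul_of_forall_norm_apply_le zero_le_one fun i ↦
    (PiLp.norm_apply_le (X i) i).trans_eq (one_mul _).symm

theorem extendedPseudoGrad_const {Fp : ∀ i : Fin N, GSpace n → EuclideanSpace ℝ (Fin (n i))}
    {F : GSpace n → GSpace n} (hFdef : ∀ x i, F x i = Fp i x) (x : GSpace n) :
    extendedPseudoGrad Fp (WithLp.toLp 2 fun _ ↦ x) = F x :=
  PiLp.ext fun i ↦ (hFdef x i).symm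

theorem norm_extendedPseudoGrad_sub_le
    {Fp : ∀ i : Fin N, GSpace n → EuclideanSpace ℝ (Fin (n i))} {ι : ℝ} (hι : 0 ≤ ι)
    (hFpLip : ∀ i, ∀ x y : GSpace n, ‖Fp i x - Fp i y‖ ≤ ι * ‖x - y‖) (X Y : Stacked n) :
    ‖extendedPseudoGrad Fp X - extendedPseudoGrad Fp Y‖ ≤ ι * ‖X - Y‖ :=
  PiLp.norm_le_mul_of_forall_norm_apply_le hι fun i ↦ hFpLip i (X i) (Y i)

theorem inner_sub_const_G_eq {Fp : ∀ i : Fin N, GSpace n → EuclideanSpace ℝ (Fin (n i))}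
    {L : Matrix (Fin N) (Fin N) ℝ} {κ : ℝ} {G : Stacked n → Stacked n}
    (hG : ∀ X i, G X i = -blockEmb n i (Fp i (X i)) - κ • ∑ j, L i j • X j)
    (hrow : ∀ i, ∑ j, L i j = 0) (X : Stacked n) (x : GSpace n) :
    ⟪X - WithLp.toLp 2 (fun _ ↦ x), G X⟫ =
      -⟪ownActions (X - WithLp.toLp 2 fun _ ↦ x), extendedPseudoGrad Fp X⟫ -
        κ * ∑ i, ∑ j, L i j * ⟪X i - x, X j - x⟫ := by
  have hcentre : ∀ i, ∑ j, L i j • X j = ∑ j, L i j • (X j - x) := fun i ↦ by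
    simp only [smul_sub, Finset.sum_sub_distrib, ← Finset.sum_smul, hrow, zero_smul, sub_zero]
  rw [PiLp.inner_apply, PiLp.inner_apply, Finset.mul_sum, ← Finset.sum_neg_distrib,
    ← Finset.sum_sub_distrib]
  refine Finset.sum_congr rfl fun i _ ↦ ?_
  rw [hG, hcentre, inner_sub_right, inner_neg_right, inner_blockEmb, real_inner_smul_right,
    inner_sum]
  simp only [real_inner_smul_right]
  rfl

theorem le_inner_ownActions_extendedPseudoGrad
    {Fp : ∀ i : Fin N, GSpace n → EuclideanSpace ℝ (Fin (n i))} {F : GSpace n → GSpace n}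
    (hFdef : ∀ x i, F x i = Fp i x) {ε ι : ℝ} (hι : 0 ≤ ι)
    (hmono : ∀ x y : GSpace n, ε * ‖x - y‖ ^ 2 ≤ ⟪x - y, F x - F y⟫)
    (hFLip : ∀ x y : GSpace n, ‖F x - F y‖ ≤ ι * ‖x - y‖)
    (hFpLip : ∀ i, ∀ x y : GSpace n, ‖Fp i x - Fp i y‖ ≤ ι * ‖x - y‖)
    (X : Stacked n) (x y : GSpace n) :
    ε * ‖x - y‖ ^ 2 - 2 * ι * ‖x - y‖ * ‖X - WithLp.toLp 2 fun _ ↦ x‖ -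
        ι * ‖X - WithLp.toLp 2 fun _ ↦ x‖ ^ 2 ≤
      ⟪ownActions (X - WithLp.toLp 2 fun _ ↦ y), extendedPseudoGrad Fp X - F y⟫ := by
  set q := ‖X - WithLp.toLp 2 fun _ ↦ x‖
  set w := ownActions (X - WithLp.toLp 2 fun _ ↦ x)
  set b := extendedPseudoGrad Fp X - F x
  have hw : ‖w‖ ≤ q := norm_ownActions_le _
  have hb : ‖b‖ ≤ ι * q := by
    simpa only [b, ← extendedPseudoGrad_const hFdef x] using
      norm_extendedPseudoGrad_sub_le hι hFpLip X _
  have hactions : ownActions (X - WithLp.toLp 2 fun _ ↦ y) = (x - y) + w := by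
    simp only [w, ownActions_sub, ownActions_const]; abel
  have hgrads : extendedPseudoGrad Fp X - F y = (F x - F y) + b := by
    simp only [b]; abel
  rw [hactions, hgrads, inner_add_left, inner_add_right, inner_add_right]
  linarith [hmono x y, neg_mul_le_real_inner_of_norm_le (le_refl ‖x - y‖) hb,
    neg_mul_le_real_inner_of_norm_le hw (hFLip x y), neg_mul_le_real_inner_of_norm_le hw hb]

theorem inner_sub_const_G_le {Fp : ∀ i : Fin N, GSpace n → EuclideanSpace ℝ (Fin (n i))}
    {F : GSpace n → GSpace n} (hFdef : ∀ x i, F x i = Fp i x) {ε ι : ℝ} (hι : 0 ≤ ι)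
    (hmono : ∀ x y : GSpace n, ε * ‖x - y‖ ^ 2 ≤ ⟪x - y, F x - F y⟫)
    (hFLip : ∀ x y : GSpace n, ‖F x - F y‖ ≤ ι * ‖x - y‖)
    (hFpLip : ∀ i, ∀ x y : GSpace n, ‖Fp i x - Fp i y‖ ≤ ι * ‖x - y‖)
    {xstar : GSpace n} (hstar : F xstar = 0) {L : Matrix (Fin N) (Fin N) ℝ}
    (hrow : ∀ i, ∑ j, L i j = 0) (hcol : ∀ j, ∑ i, L i j = 0) {lam₂ : ℝ}
    (hgap : ∀ v : Fin N → ℝ, ∑ i, v i = 0 → lam₂ * (v ⬝ᵥ v) ≤ v ⬝ᵥ L *ᵥ v)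
    {κ : ℝ} (hκ : 0 ≤ κ) {G : Stacked n → Stacked n}
    (hG : ∀ X i, G X i = -blockEmb n i (Fp i (X i)) - κ • ∑ j, L i j • X j)
    (hN : 1 ≤ N) {c : ℝ} (hc : 0 ≤ c)
    (hquad : ∀ p q : ℝ,
      c * (p ^ 2 + q ^ 2) ≤ ε * p ^ 2 - 2 * ι * p * q + (κ * lam₂ - ι) * q ^ 2)
    (X : Stacked n) :
    ⟪X - WithLp.toLp 2 (fun _ ↦ xstar), G X⟫ ≤
      -(c / N) * ‖X - WithLp.toLp 2 fun _ ↦ xstar‖ ^ 2 := by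
  have : NeZero N := ⟨by omega⟩
  set xhat := (N : ℝ)⁻¹ • ∑ i, X i
  have hmean : ∑ i, (X i - xhat) = 0 := by
    simpa using sum_sub_card_inv_smul_sum_eq_zero X.ofLp
  set p := ‖xhat - xstar‖
  set q := ‖X - WithLp.toLp 2 fun _ ↦ xhat‖
  have hnorm : ‖X - WithLp.toLp 2 fun _ ↦ xstar‖ ^ 2 = N * p ^ 2 + q ^ 2 := by
    simpa using PiLp.norm_sub_const_sq_eq X xstar hmean
  have hconsensus : lam₂ * q ^ 2 ≤ ∑ i, ∑ j, L i j * ⟪X i - xstar, X j - xstar⟫ := by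
    rw [sum_sum_mul_inner_sub_sub hrow hcol, ← sum_sum_mul_inner_sub_sub hrow hcol X xhat,
      PiLp.norm_sq_eq_of_L2]
    exact mul_sum_norm_sq_le_sum_sum_mul_inner hgap hmean
  have hown := le_inner_ownActions_extendedPseudoGrad hFdef hι hmono hFLip hFpLip X xhat xstar
  rw [hstar, sub_zero] at hown
  have hcN : c / N * q ^ 2 ≤ c * q ^ 2 :=
    mul_le_mul_of_nonneg_right (div_le_self hc (by exact_mod_cast hN)) (sq_nonneg q)
  have hcp : c / N * (N * p ^ 2) = c * p ^ 2 := by field_simp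
  rw [inner_sub_const_G_eq hG hrow, hnorm]
  linarith [hquad p q, mul_le_mul_of_nonneg_left hconsensus hκ]

end Game

/-- **Corollary 1.** Without attacks, under strong monotonicity and
Lipschitz assumptions, a spectral-gap condition on `(L+Lᵀ)/2`, and
`κ > (ι²/ε + ι)/λ₂`, there exists `λ > 0` such that every solution of
`x′ = G(x)` converges exponentially to the stacked Nash equilibrium `X̃`:
`‖x(t) − X̃‖ ≤ e^{−λ(t−t₀)} ‖x(t₀) − X̃‖`. -/
theorem exponential_NE_seeking_without_attacks
    (N : ℕ) (hN : 1 ≤ N) (n : Fin N → ℕ)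
    (Fp : ∀ i : Fin N, GSpace n → EuclideanSpace ℝ (Fin (n i)))
    (F : GSpace n → GSpace n) (hFdef : ∀ x i, F x i = Fp i x)
    (ε ι : ℝ) (hε : 0 < ε) (hι : 0 < ι)
    (hmono : ∀ x y : GSpace n, ε * ‖x - y‖ ^ 2 ≤ ⟪x - y, F x - F y⟫)
    (hFLip : ∀ x y : GSpace n, ‖F x - F y‖ ≤ ι * ‖x - y‖)
    (hFpLip : ∀ i, ∀ x y : GSpace n, ‖Fp i x - Fp i y‖ ≤ ι * ‖x - y‖)
    (xstar : GSpace n) (hstar : F xstar = 0)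
    (L : Matrix (Fin N) (Fin N) ℝ)
    (hL1 : L.mulVec (fun _ => 1) = 0)
    (hL2 : Matrix.vecMul (fun _ => 1) L = 0)
    (lam₂ : ℝ) (hlam₂ : 0 < lam₂)
    (hgap : ∀ v : Fin N → ℝ, ∑ i, v i = 0 →
      lam₂ * (v ⬝ᵥ v) ≤ v ⬝ᵥ ((((2:ℝ)⁻¹) • (L + Lᵀ)).mulVec v))
    (κ : ℝ) (hκ : κ > (ι ^ 2 / ε + ι) / lam₂)
    (Xt : Stacked n) (hXt : ∀ i, Xt i = xstar)
    (G : Stacked n → Stacked n)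
    (hG : ∀ X i, G X i = -blockEmb n i (Fp i (X i)) - κ • ∑ j, L i j • X j) :
    ∃ lam > 0, ∀ t₀ : ℝ, ∀ x : ℝ → Stacked n,
      (∀ t, t₀ ≤ t → HasDerivAt x (G (x t)) t) →
      ∀ t, t₀ ≤ t → ‖x t - Xt‖ ≤ Real.exp (-lam * (t - t₀)) * ‖x t₀ - Xt‖ := by
  have hdisc : ι ^ 2 / ε < κ * lam₂ - ι := by linarith [(div_lt_iff₀ hlam₂).1 hκ]
  obtain ⟨c, hc, hquad⟩ := exists_pos_mul_sq_add_sq_le hε ((div_lt_iff₀' hε).1 hdisc)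
  have hdiss := inner_sub_const_G_le hFdef hι.le hmono hFLip hFpLip hstar
    (sum_row_eq_zero_of_mulVec_one hL1) (sum_col_eq_zero_of_vecMul_one hL2)
    (fun v hv ↦ (hgap v hv).trans_eq (dotProduct_symmPart_mulVec L v))
    (le_trans (by positivity) hκ.le) hG hN hc.le hquad
  obtain rfl : Xt = WithLp.toLp 2 fun _ ↦ xstar := PiLp.ext hXt
  exact ⟨c / N, div_pos hc (Nat.cast_pos.2 hN), fun t₀ x hx t ht ↦
    norm_sub_le_exp_mul_of_inner_deriv_le hx (fun s _ ↦ hdiss (x s)) ht⟩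
end
end

section
/- (Switching bound.) Under the switching setup, let λ_a, λ_b > 0, μ ≥ 1, and let V_a, V_b : ℝ → ℝ be nonnegative functions such that: (i) V_a(s) ≤ μ V_b(s) and V_b(s) ≤ μ V_a(s) for all s ≥ t₀; (ii) for every k and all τ_{2k} ≤ s ≤ u ≤ τ_{2k+1}: V_a(u) ≤ e^{−λ_a(u−s)} V_a(s); (iii) for every k and all τ_{2k+1} ≤ s ≤ u ≤ τ_{2k+2}: V_b(u) ≤ e^{λ_b(u−s)} V_b(s). Then for every t ≥ t₀: if t ∈ [τ_{2k}, τ_{2k+1}) then V_a(t) ≤ μ^{2k} e^{−λ_a|Ξ_s(t₀,t)|} e^{λ_b|Ξ_a(t₀,t)|} V_a(t₀), and if t ∈ [τ_{2k+1}, τ_{2k+2}) then V_b(t) ≤ μ^{2k+1} e^{−λ_a|Ξ_s(t₀,t)|} e^{λ_b|Ξ_a(t₀,t)|} V_a(t₀). Equivalently, the piecewise function V (equal to V_a on attack-free intervals and to V_b on attack intervals) satisfies V(t) ≤ μ^{2 N_a(t₀,t)} e^{−λ_a|Ξ_s(t₀,t)|} e^{λ_b|Ξ_a(t₀,t)|}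 V(t₀) for all t ≥ t₀. -/
open MeasureTheory Set

noncomputable def sbA (τ : ℕ → ℝ) (k : ℕ) : ℝ :=
  ∑ j ∈ Finset.range k, (τ (2*j+2) - τ (2*j+1))

lemma sbA_nonneg (τ : ℕ → ℝ) (hτ : StrictMono τ) (k : ℕ) : 0 ≤ sbA τ k :=
  Finset.sum_nonneg fun j _ => sub_nonneg.2 (hτ (by omega)).le

lemma sbA_succ (τ : ℕ → ℝ) (k : ℕ) :
    sbA τ (k+1) = sbA τ k + (τ (2*k+2) - τ (2*k+1)) := by
  simp [sbA, Finset.sum_range_succ]; ring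

lemma sb_vol_prefix (τ : ℕ → ℝ) (hτ : StrictMono τ) (k : ℕ) :
    volume (⋃ j ∈ Finset.range k, Ico (τ (2*j+1)) (τ (2*j+2))) =
      ENNReal.ofReal (sbA τ k) := by
  rw [measure_biUnion_finset ?_ (fun j _ => measurableSet_Ico)]
  · rw [sbA, ENNReal.ofReal_sum_of_nonneg (fun j _ => sub_nonneg.2 (hτ (by omega)).le)]
    exact Finset.sum_congr rfl fun j _ => Real.volume_Ico
  · intro i _ j _ hij
    rcases lt_or_gt_of_ne hij with h | h
    · refine Set.Ico_disjoint_Ico.2 ?_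
      exact le_trans (min_le_left _ _) (le_trans (hτ.monotone (by omega)) (le_max_right _ _))
    · refine Set.Ico_disjoint_Ico.2 ?_
      exact le_trans (min_le_right _ _) (le_trans (hτ.monotone (by omega)) (le_max_left _ _))

-- Ξa formula on attack-free closed interval
lemma sb_Xi_free (t₀ : ℝ) (τ : ℕ → ℝ) (hτ0 : τ 0 = t₀) (hτ : StrictMono τ)
    (k : ℕ) (t : ℝ) (ht : t ∈ Icc (τ (2*k)) (τ (2*k+1))) :
    (volume ((⋃ j : ℕ, Set.Ico (τ (2*j+1)) (τ (2*j+2))) ∩ Set.Icc t₀ t)).toReal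
      = sbA τ k := by
  have hlow : (⋃ j ∈ Finset.range k, Ico (τ (2*j+1)) (τ (2*j+2))) ⊆
      (⋃ j : ℕ, Set.Ico (τ (2*j+1)) (τ (2*j+2))) ∩ Set.Icc t₀ t := by
    intro x hx
    simp only [Finset.mem_range, Set.mem_iUnion, Set.mem_Ico] at hx
    obtain ⟨j, hj, hx1, hx2⟩ := hx
    refine ⟨Set.mem_iUnion.2 ⟨j, hx1, hx2⟩, ?_, ?_⟩
    · exact le_trans (hτ0 ▸ hτ.monotone (Nat.zero_le _)) hx1
    · exact le_trans hx2.le (le_trans (hτ.monotone (by omega)) ht.1)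
  have hup : (⋃ j : ℕ, Set.Ico (τ (2*j+1)) (τ (2*j+2))) ∩ Set.Icc t₀ t ⊆
      (⋃ j ∈ Finset.range k, Ico (τ (2*j+1)) (τ (2*j+2))) ∪ {t} := by
    rintro x ⟨hx, hx0, hxt⟩
    obtain ⟨j, hx1, hx2⟩ := Set.mem_iUnion.1 hx
    rcases lt_or_ge j k with hj | hj
    · left
      simp only [Finset.mem_range, Set.mem_iUnion, Set.mem_Ico]
      exact ⟨j, hj, hx1, hx2⟩
    · right
      have h1 : τ (2*k+1) ≤ τ (2*j+1) := hτ.monotone (by omega)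
      have : x = t := le_antisymm hxt (le_trans ht.2 (le_trans h1 hx1))
      simp [this]
  have h1 : ENNReal.ofReal (sbA τ k) ≤
      volume ((⋃ j : ℕ, Set.Ico (τ (2*j+1)) (τ (2*j+2))) ∩ Set.Icc t₀ t) := by
    rw [← sb_vol_prefix τ hτ k]; exact measure_mono hlow
  have h2 : volume ((⋃ j : ℕ, Set.Ico (τ (2*j+1)) (τ (2*j+2))) ∩ Set.Icc t₀ t) ≤
      ENNReal.ofReal (sbA τ k) := by
    refine le_trans (measure_mono hup) ?_
    refine le_trans (measure_union_le _ _) (le_of_eq ?_)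
    rw [sb_vol_prefix τ hτ k, Real.volume_singleton, add_zero]
  rw [le_antisymm h2 h1, ENNReal.toReal_ofReal (sbA_nonneg τ hτ k)]

-- Ξa formula on attack closed interval
lemma sb_Xi_att (t₀ : ℝ) (τ : ℕ → ℝ) (hτ0 : τ 0 = t₀) (hτ : StrictMono τ)
    (k : ℕ) (t : ℝ) (ht : t ∈ Icc (τ (2*k+1)) (τ (2*k+2))) :
    (volume ((⋃ j : ℕ, Set.Ico (τ (2*j+1)) (τ (2*j+2))) ∩ Set.Icc t₀ t)).toReal
      = sbA τ k + (t - τ (2*k+1)) := by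
  have ht0 : t₀ ≤ τ (2*k+1) := hτ0 ▸ hτ.monotone (Nat.zero_le _)
  have hlow : (⋃ j ∈ Finset.range k, Ico (τ (2*j+1)) (τ (2*j+2))) ∪ Ico (τ (2*k+1)) t ⊆
      (⋃ j : ℕ, Set.Ico (τ (2*j+1)) (τ (2*j+2))) ∩ Set.Icc t₀ t := by
    rintro x (hx | hx)
    · simp only [Finset.mem_range, Set.mem_iUnion, Set.mem_Ico] at hx
      obtain ⟨j, hj, hx1, hx2⟩ := hx
      refine ⟨Set.mem_iUnion.2 ⟨j, hx1, hx2⟩, le_trans (hτ0 ▸ hτ.monotone (Nat.zero_le _)) hx1, ?_⟩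
      exact le_trans hx2.le (le_trans (hτ.monotone (by omega)) ht.1)
    · obtain ⟨hx1, hx2⟩ := hx
      refine ⟨Set.mem_iUnion.2 ⟨k, hx1, lt_of_lt_of_le hx2 ht.2⟩, le_trans ht0 hx1, hx2.le⟩
  have hup : (⋃ j : ℕ, Set.Ico (τ (2*j+1)) (τ (2*j+2))) ∩ Set.Icc t₀ t ⊆
      (⋃ j ∈ Finset.range k, Ico (τ (2*j+1)) (τ (2*j+2))) ∪ Icc (τ (2*k+1)) t := by
    rintro x ⟨hx, hx0, hxt⟩
    obtain ⟨j, hx1, hx2⟩ := Set.mem_iUnion.1 hx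
    rcases lt_or_ge j k with hj | hj
    · left
      simp only [Finset.mem_range, Set.mem_iUnion, Set.mem_Ico]
      exact ⟨j, hj, hx1, hx2⟩
    · rcases eq_or_lt_of_le hj with hj' | hj'
      · right
        exact ⟨hj' ▸ hx1, hxt⟩
      · exfalso
        have h1 : τ (2*k+2) < τ (2*j+1) := hτ (by omega)
        linarith [hx1, hxt, ht.2]
  have hdisj : Disjoint (⋃ j ∈ Finset.range k, Ico (τ (2*j+1)) (τ (2*j+2))) (Ico (τ (2*k+1)) t) := by
    refine Set.disjoint_left.2 ?_
    intro x hx hx'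
    simp only [Finset.mem_range, Set.mem_iUnion, Set.mem_Ico] at hx
    obtain ⟨j, hj, hx1, hx2⟩ := hx
    have : τ (2*j+2) ≤ τ (2*k+1) := hτ.monotone (by omega)
    exact absurd hx'.1 (not_le.2 (lt_of_lt_of_le hx2 this))
  have hmain : volume ((⋃ j : ℕ, Set.Ico (τ (2*j+1)) (τ (2*j+2))) ∩ Set.Icc t₀ t)
      = ENNReal.ofReal (sbA τ k) + ENNReal.ofReal (t - τ (2*k+1)) := by
    apply le_antisymm
    · refine le_trans (measure_mono hup) ?_
      refine le_trans (measure_union_le _ _) ?_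
      rw [sb_vol_prefix τ hτ k, Real.volume_Icc]
    · calc ENNReal.ofReal (sbA τ k) + ENNReal.ofReal (t - τ (2*k+1))
          = volume ((⋃ j ∈ Finset.range k, Ico (τ (2*j+1)) (τ (2*j+2))) ∪ Ico (τ (2*k+1)) t) := by
            rw [measure_union hdisj measurableSet_Ico, sb_vol_prefix τ hτ k, Real.volume_Ico]
        _ ≤ _ := measure_mono hlow
  rw [hmain, ← ENNReal.ofReal_add (sbA_nonneg τ hτ k) (sub_nonneg.2 ht.1),
    ENNReal.toReal_ofReal (by linarith [sbA_nonneg τ hτ k, ht.1])]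

/-- **switching bound.** Given switching times
`t₀ = τ₀ < τ₁ < ⋯ → ∞` with attack-free intervals `[τ_{2k}, τ_{2k+1})` and attack
intervals `[τ_{2k+1}, τ_{2k+2})`, nonnegative functions `V_a, V_b` comparable up to a
factor `μ ≥ 1`, with `V_a` decaying at rate `λ_a` on attack-free intervals and `V_b`
growing at rate at most `λ_b` on attack intervals, one has, for
`t ∈ [τ_{2k}, τ_{2k+1})`,
`V_a(t) ≤ μ^{2k} e^{−λ_a|Ξ_s(t₀,t)|} e^{λ_b|Ξ_a(t₀,t)|} V_a(t₀)`, and for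
`t ∈ [τ_{2k+1}, τ_{2k+2})`,
`V_b(t) ≤ μ^{2k+1} e^{−λ_a|Ξ_s(t₀,t)|} e^{λ_b|Ξ_a(t₀,t)|} V_a(t₀)`,
where `|Ξ_a(t₀,t)|` is the total length of attack time in `[t₀,t]` and
`|Ξ_s(t₀,t)| = (t − t₀) − |Ξ_a(t₀,t)|`. -/
theorem switching_bound
    (t₀ : ℝ) (τ : ℕ → ℝ) (hτ0 : τ 0 = t₀) (hτmono : StrictMono τ)
    (hτtop : Filter.Tendsto τ Filter.atTop Filter.atTop)
    (lamA lamB : ℝ) (hlamA : 0 < lamA) (hlamB : 0 < lamB)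
    (μ : ℝ) (hμ : 1 ≤ μ)
    (Va Vb : ℝ → ℝ) (hVa0 : ∀ s, 0 ≤ Va s) (hVb0 : ∀ s, 0 ≤ Vb s)
    (hab : ∀ s, t₀ ≤ s → Va s ≤ μ * Vb s)
    (hba : ∀ s, t₀ ≤ s → Vb s ≤ μ * Va s)
    (hdec : ∀ k : ℕ, ∀ s u : ℝ, τ (2 * k) ≤ s → s ≤ u → u ≤ τ (2 * k + 1) →
      Va u ≤ Real.exp (-lamA * (u - s)) * Va s)
    (hinc : ∀ k : ℕ, ∀ s u : ℝ, τ (2 * k + 1) ≤ s → s ≤ u → u ≤ τ (2 * k + 2) →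
      Vb u ≤ Real.exp (lamB * (u - s)) * Vb s)
    (Ξa : ℝ → ℝ)
    (hΞa : ∀ t, Ξa t =
      (volume ((⋃ k : ℕ, Set.Ico (τ (2 * k + 1)) (τ (2 * k + 2))) ∩ Set.Icc t₀ t)).toReal) :
    ∀ k : ℕ, ∀ t : ℝ,
      (t ∈ Set.Ico (τ (2 * k)) (τ (2 * k + 1)) →
        Va t ≤ μ ^ (2 * k) * Real.exp (-lamA * ((t - t₀) - Ξa t)) *
          Real.exp (lamB * Ξa t) * Va t₀) ∧
      (t ∈ Set.Ico (τ (2 * k + 1)) (τ (2 * k + 2)) →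
        Vb t ≤ μ ^ (2 * k + 1) * Real.exp (-lamA * ((t - t₀) - Ξa t)) *
          Real.exp (lamB * Ξa t) * Va t₀) := by
  have ht0le : ∀ n, t₀ ≤ τ n := fun n => hτ0 ▸ hτmono.monotone (Nat.zero_le n)
  have hXifree : ∀ k : ℕ, ∀ t ∈ Icc (τ (2*k)) (τ (2*k+1)), Ξa t = sbA τ k := by
    intro k t ht; rw [hΞa t]; exact sb_Xi_free t₀ τ hτ0 hτmono k t ht
  have hXiatt : ∀ k : ℕ, ∀ t ∈ Icc (τ (2*k+1)) (τ (2*k+2)), Ξa t = sbA τ k + (t - τ (2*k+1)) := by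
    intro k t ht; rw [hΞa t]; exact sb_Xi_att t₀ τ hτ0 hτmono k t ht
  -- strengthened statement on closed intervals
  suffices H : ∀ k : ℕ,
      (∀ t ∈ Icc (τ (2*k)) (τ (2*k+1)),
        Va t ≤ μ ^ (2*k) * Real.exp (-lamA * ((t - t₀) - Ξa t)) *
          Real.exp (lamB * Ξa t) * Va t₀) ∧
      (∀ t ∈ Icc (τ (2*k+1)) (τ (2*k+2)),
        Vb t ≤ μ ^ (2*k+1) * Real.exp (-lamA * ((t - t₀) - Ξa t)) *
          Real.exp (lamB * Ξa t) * Va t₀) by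
    intro k t
    exact ⟨fun ht => (H k).1 t ⟨ht.1, ht.2.le⟩, fun ht => (H k).2 t ⟨ht.1, ht.2.le⟩⟩
  intro k
  induction k with
  | zero =>
    constructor
    · intro t ht
      have hX : Ξa t = 0 := by simpa [sbA] using hXifree 0 t ht
      have h00 : τ (2*0) = t₀ := by norm_num [hτ0]
      have h := hdec 0 t₀ t (le_of_eq h00) (h00 ▸ ht.1) ht.2
      rw [hX]
      simpa using h
    · intro t ht
      have hX : Ξa t = t - τ (2*0+1) := by simpa [sbA] using hXiatt 0 t ht
      have h00 : τ (2*0) = t₀ := by norm_num [hτ0]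
      have h1 := hinc 0 (τ (2*0+1)) t le_rfl ht.1 ht.2
      have h2 := hba (τ (2*0+1)) (ht0le _)
      have h3 := hdec 0 t₀ (τ (2*0+1)) (le_of_eq h00) (h00 ▸ ht0le _) le_rfl
      have hexp : (0:ℝ) < Real.exp (lamB * (t - τ (2*0+1))) := Real.exp_pos _
      calc Vb t ≤ Real.exp (lamB * (t - τ (2*0+1))) * Vb (τ (2*0+1)) := h1
        _ ≤ Real.exp (lamB * (t - τ (2*0+1))) * (μ * Va (τ (2*0+1))) := by
            exact mul_le_mul_of_nonneg_left h2 hexp.le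
        _ ≤ Real.exp (lamB * (t - τ (2*0+1))) * (μ * (Real.exp (-lamA * (τ 1 - t₀)) * Va t₀)) := by
            refine mul_le_mul_of_nonneg_left ?_ hexp.le
            exact mul_le_mul_of_nonneg_left h3 (by linarith)
        _ = μ ^ (2*0+1) * Real.exp (-lamA * ((t - t₀) - Ξa t)) *
              Real.exp (lamB * Ξa t) * Va t₀ := by
            rw [hX, pow_one,
              show -lamA * (t - t₀ - (t - τ (2*0+1))) = -lamA * (τ (2*0+1) - t₀) by ring]
            ring
  | succ k ih =>
    have key1 : ∀ t ∈ Icc (τ (2*(k+1))) (τ (2*(k+1)+1)),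
        Va t ≤ μ ^ (2*(k+1)) * Real.exp (-lamA * ((t - t₀) - Ξa t)) *
          Real.exp (lamB * Ξa t) * Va t₀ := by
      intro t ht
      have hmem : τ (2*(k+1)) ∈ Icc (τ (2*k+1)) (τ (2*k+2)) := by
        constructor
        · exact hτmono.monotone (by omega)
        · exact le_of_eq (congrArg τ (by ring))
      have hprev := ih.2 (τ (2*(k+1))) hmem
      have hXprev : Ξa (τ (2*(k+1))) = sbA τ (k+1) := by
        rw [hXiatt k (τ (2*(k+1))) hmem, sbA_succ]
        have : 2*(k+1) = 2*k+2 := by ring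
        rw [this]
      have hXt : Ξa t = sbA τ (k+1) := hXifree (k+1) t ht
      have h1 := hdec (k+1) (τ (2*(k+1))) t le_rfl ht.1 ht.2
      have h2 := hab (τ (2*(k+1))) (ht0le _)
      have h3 := hba (τ (2*(k+1))) (ht0le _)
      have hexp : (0:ℝ) < Real.exp (-lamA * (t - τ (2*(k+1)))) := Real.exp_pos _
      have hμpow : (0:ℝ) ≤ μ ^ (2*k+1) := pow_nonneg (by linarith) _
      calc Va t ≤ Real.exp (-lamA * (t - τ (2*(k+1)))) * Va (τ (2*(k+1))) := h1
        _ ≤ Real.exp (-lamA * (t - τ (2*(k+1)))) * (μ * Vb (τ (2*(k+1)))) :=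
            mul_le_mul_of_nonneg_left h2 hexp.le
        _ ≤ Real.exp (-lamA * (t - τ (2*(k+1)))) * (μ *
              (μ ^ (2*k+1) * Real.exp (-lamA * ((τ (2*(k+1)) - t₀) - Ξa (τ (2*(k+1))))) *
                Real.exp (lamB * Ξa (τ (2*(k+1)))) * Va t₀)) := by
            refine mul_le_mul_of_nonneg_left ?_ hexp.le
            exact mul_le_mul_of_nonneg_left hprev (by linarith)
        _ = μ ^ (2*(k+1)) * Real.exp (-lamA * ((t - t₀) - Ξa t)) *
              Real.exp (lamB * Ξa t) * Va t₀ := by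
            rw [hXprev, hXt]
            have key : Real.exp (-lamA * (t - τ (2*(k+1)))) *
                Real.exp (-lamA * (τ (2*(k+1)) - t₀ - sbA τ (k+1))) =
                Real.exp (-lamA * (t - t₀ - sbA τ (k+1))) := by
              rw [← Real.exp_add]; congr 1; ring
            have hpow : μ^(2*(k+1)) = μ^(2*k+1) * μ := by ring
            rw [hpow]
            linear_combination (μ ^ (2*k+1) * μ * Real.exp (lamB * sbA τ (k+1)) * Va t₀) * key
    refine ⟨key1, ?_⟩
    intro t ht
    have hmem : τ (2*(k+1)+1) ∈ Icc (τ (2*(k+1))) (τ (2*(k+1)+1)) :=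
      ⟨hτmono.monotone (by omega), le_rfl⟩
    have hprev := key1 (τ (2*(k+1)+1)) hmem
    have hXprev : Ξa (τ (2*(k+1)+1)) = sbA τ (k+1) := hXifree (k+1) _ hmem
    have hXt : Ξa t = sbA τ (k+1) + (t - τ (2*(k+1)+1)) := hXiatt (k+1) t ht
    have h1 := hinc (k+1) (τ (2*(k+1)+1)) t le_rfl ht.1 ht.2
    have h2 := hba (τ (2*(k+1)+1)) (ht0le _)
    have hexp : (0:ℝ) < Real.exp (lamB * (t - τ (2*(k+1)+1))) := Real.exp_pos _
    calc Vb t ≤ Real.exp (lamB * (t - τ (2*(k+1)+1))) * Vb (τ (2*(k+1)+1)) := h1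
      _ ≤ Real.exp (lamB * (t - τ (2*(k+1)+1))) * (μ * Va (τ (2*(k+1)+1))) :=
          mul_le_mul_of_nonneg_left h2 hexp.le
      _ ≤ Real.exp (lamB * (t - τ (2*(k+1)+1))) * (μ *
            (μ ^ (2*(k+1)) * Real.exp (-lamA * ((τ (2*(k+1)+1) - t₀) - Ξa (τ (2*(k+1)+1)))) *
              Real.exp (lamB * Ξa (τ (2*(k+1)+1))) * Va t₀)) := by
          refine mul_le_mul_of_nonneg_left ?_ hexp.le
          exact mul_le_mul_of_nonneg_left hprev (by linarith)
      _ = μ ^ (2*(k+1)+1) * Real.exp (-lamA * ((t - t₀) - Ξa t)) *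
            Real.exp (lamB * Ξa t) * Va t₀ := by
          rw [hXprev, hXt, pow_succ,
            show -lamA * (t - t₀ - (sbA τ (k+1) + (t - τ (2*(k+1)+1)))) =
              -lamA * (τ (2*(k+1)+1) - t₀ - sbA τ (k+1)) by ring]
          have key : Real.exp (lamB * (t - τ (2*(k+1)+1))) *
              Real.exp (lamB * sbA τ (k+1)) =
              Real.exp (lamB * (sbA τ (k+1) + (t - τ (2*(k+1)+1)))) := by
            rw [← Real.exp_add]; congr 1; ring
          linear_combination (μ ^ (2*(k+1)) * μ *
            Real.exp (-lamA * (τ (2*(k+1)+1) - t₀ - sbA τ (k+1))) * Va t₀) * key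
end

section
/- (Abstract form of Theorem 1's frequency/duration argument.) Under the switching setup, let λ_a, λ_b > 0, μ > 1, and let V_a, V_b : ℝ → ℝ be nonnegative functions satisfying: (i) V_a(s) ≤ μ V_b(s) and V_b(s) ≤ μ V_a(s) for all s ≥ t₀; (ii) for every k and all τ_{2k} ≤ s ≤ u ≤ τ_{2k+1}: V_a(u) ≤ e^{−λ_a(u−s)} V_a(s); (iii) for every k and all τ_{2k+1} ≤ s ≤ u ≤ τ_{2k+2}: V_b(u) ≤ e^{λ_b(u−s)} V_b(s). Assume the attack-frequency condition: there exist η* ∈ (0, λ_a), N₀ > 0 and T_f ≥ 2 ln(μ)/η* with N_a(t₀,t) ≤ N₀ + (t − t₀)/T_f for all t ≥ t₀; and the attack-duration condition: there exist T₀ ≥ 0 and T_a > (λ_a + λ_b)/(λ_a − η*) with |Ξ_a(t₀,t)| ≤ T₀ + (t − t₀)/T_a for all t ≥ t₀. Then η := λ_a − (λ_a + λ_b)/T_a − η* > 0, and the piecewise function V (equal to V_a on attack-free intervals and to V_b on attack intervals) satisfies V(t) ≤ e^{(λ_a+λ_b)T₀ + 2 N₀ ln μ} · e^{−η (t − t₀)}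 · V(t₀) for all t ≥ t₀. -/
open MeasureTheory Set Filter Real Function

/-!
On an attack-free interval `V_a` decays at rate `λ_a`, on an attack interval `V_b` grows at rate
`λ_b`, and each switch costs a factor `μ`. Hence on the `n`-th interval
`V t ≤ μ ^ n * exp ((λ_a + λ_b) * A - λ_a * (t - t₀)) * V t₀`, where `A ≤ |Ξ_a(t₀, t)|` is the
time spent under attack so far. Since `n ≤ 2 N_a(t₀, t)`, the frequency condition bounds `μ ^ n`
by `exp (2 N₀ ln μ + η* (t - t₀))`, and the duration condition bounds `(λ_a + λ_b) * A`.
-/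

theorem exists_mem_Ico_succ_of_tendsto {α : Type*} [LinearOrder α] [NoMaxOrder α] {τ : ℕ → α}
    (hτ : Tendsto τ atTop atTop) {t : α} (ht : τ 0 ≤ t) : ∃ n, t ∈ Ico (τ n) (τ (n + 1)) := by
  by_contra! h
  obtain ⟨N, hN⟩ := (hτ.eventually_gt_atTop t).exists
  have hle : ∀ n, τ n ≤ t := fun n =>
    Nat.rec ht (fun n ih => not_lt.1 fun hlt => h n ⟨ih, hlt⟩) n
  exact (hle N).not_gt hN

theorem StrictMono.le_iff_le_of_mem_Ico {α : Type*} [LinearOrder α] {τ : ℕ → α}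
    (hτ : StrictMono τ) {t : α} {n : ℕ} (ht : t ∈ Ico (τ n) (τ (n + 1))) (j : ℕ) :
    τ j ≤ t ↔ j ≤ n :=
  ⟨fun hj => Nat.lt_succ_iff.1 (hτ.lt_iff_lt.1 (hj.trans_lt ht.2)),
    fun hj => (hτ.monotone hj).trans ht.1⟩

theorem ncard_setOf_le_of_mem_Ico {α : Type*} [LinearOrder α] {τ : ℕ → α} (hτ : StrictMono τ)
    {t : α} {n : ℕ}
    (ht : t ∈ Ico (τ n) (τ (n + 1))) : {k : ℕ | τ (2 * k + 1) ≤ t}.ncard = (n + 1) / 2 := by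
  have hset : {k : ℕ | τ (2 * k + 1) ≤ t} = Iio ((n + 1) / 2) := by
    ext k
    simp only [mem_ofPred_eq, mem_Iio, hτ.le_iff_le_of_mem_Ico ht]
    omega
  rw [hset, ncard_Iio_nat]

def attackSet (τ : ℕ → ℝ) : Set ℝ :=
  ⋃ k : ℕ, Ico (τ (2 * k + 1)) (τ (2 * k + 2))

theorem notMem_attackSet {τ : ℕ → ℝ} (hτ : StrictMono τ) {t : ℝ} {m : ℕ}
    (ht : t ∈ Ico (τ (2 * m)) (τ (2 * m + 1))) : t ∉ attackSet τ := by
  rintro ⟨_, ⟨k, rfl⟩, hk₁, hk₂⟩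
  have h₁ := (hτ.le_iff_le_of_mem_Ico ht _).1 hk₁
  have h₂ := (hτ.le_iff_le_of_mem_Ico ht (2 * k + 2)).not.1 hk₂.not_ge
  omega

def attackTime (τ : ℕ → ℝ) (M : ℕ) (t : ℝ) : ℝ :=
  ∑ k ∈ Finset.range M, (min t (τ (2 * k + 2)) - τ (2 * k + 1))

theorem attackTime_of_le {τ : ℕ → ℝ} (hτ : Monotone τ) {m : ℕ} {u : ℝ} (hu : τ (2 * m) ≤ u) :
    attackTime τ m u = ∑ k ∈ Finset.range m, (τ (2 * k + 2) - τ (2 * k + 1)) :=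
  Finset.sum_congr rfl fun k hk => by
    rw [min_eq_right ((hτ (by simp at hk; omega)).trans hu)]

theorem attackTime_succ_of_mem_Icc {τ : ℕ → ℝ} (hτ : Monotone τ) {m : ℕ} {u : ℝ}
    (hu : u ∈ Icc (τ (2 * m + 1)) (τ (2 * m + 2))) :
    attackTime τ (m + 1) u = attackTime τ m (τ (2 * m + 1)) + (u - τ (2 * m + 1)) := by
  have h₀ : τ (2 * m) ≤ τ (2 * m + 1) := hτ (Nat.le_succ _)
  rw [attackTime, Finset.sum_range_succ, ← attackTime, min_eq_left hu.2,
    attackTime_of_le hτ (h₀.trans hu.1), attackTime_of_le hτ h₀]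

theorem attackTime_le_volume {τ : ℕ → ℝ} (hτ : Monotone τ) (M : ℕ) (t : ℝ) :
    attackTime τ M t ≤ volume.real (attackSet τ ∩ Icc (τ 0) t) := by
  set I : ℕ → Set ℝ := fun k => Ico (τ (2 * k + 1)) (min t (τ (2 * k + 2)))
  have hdisj : PairwiseDisjoint (Finset.range M : Set ℕ) I := by
    have h : Pairwise (Disjoint on fun k => Ico (τ (2 * k + 1)) (τ (2 * (k + 1) + 1))) :=
      (show Monotone fun k => τ (2 * k + 1) from fun i j hij => hτ (by omega))
        |>.pairwise_disjoint_on_Ico_succ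
    exact fun i _ j _ hij => (h hij).mono
      (Ico_subset_Ico_right ((min_le_right _ _).trans (hτ (by omega))))
      (Ico_subset_Ico_right ((min_le_right _ _).trans (hτ (by omega))))
  have hsub : (⋃ k ∈ Finset.range M, I k) ⊆ attackSet τ ∩ Icc (τ 0) t :=
    iUnion₂_subset fun k _ x hx =>
      ⟨mem_iUnion.2 ⟨k, hx.1, hx.2.trans_le (min_le_right _ _)⟩,
        (hτ (Nat.zero_le _)).trans hx.1, (hx.2.trans_le (min_le_left _ _)).le⟩
  calc attackTime τ M t ≤ ∑ k ∈ Finset.range M, volume.real (I k) :=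
        Finset.sum_le_sum fun k _ => volume_real_Ico ▸ le_max_left _ _
    _ = volume.real (⋃ k ∈ Finset.range M, I k) :=
        (measureReal_biUnion_finset hdisj (fun _ _ => measurableSet_Ico)
          fun _ _ => measure_Ico_lt_top.ne).symm
    _ ≤ volume.real (attackSet τ ∩ Icc (τ 0) t) :=
        measureReal_mono hsub ((measure_mono inter_subset_right).trans_lt measure_Icc_lt_top).ne

theorem pow_le_exp_of_le_frequency {μ ηs N₀ Tf d : ℝ} {n : ℕ} (hμ : 1 < μ) (hηs : 0 < ηs)
    (hTf : 2 * log μ / ηs ≤ Tf) (hd : 0 ≤ d) (hn : (n : ℝ) ≤ 2 * (N₀ + d / Tf)) :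
    μ ^ n ≤ exp (2 * N₀ * log μ + ηs * d) := by
  have hlog : 0 < log μ := log_pos hμ
  have hTf₀ : 0 < Tf := (div_pos (by positivity) hηs).trans_le hTf
  have hrate : 2 * log μ * d / Tf ≤ ηs * d := by
    rw [div_le_iff₀ hTf₀]
    nlinarith [(div_le_iff₀ hηs).1 hTf]
  calc μ ^ n = exp (n * log μ) := by rw [exp_nat_mul, exp_log (by linarith)]
    _ ≤ exp (2 * N₀ * log μ + ηs * d) := by
        gcongr
        calc (n : ℝ) * log μ ≤ 2 * (N₀ + d / Tf) * log μ := by gcongr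
          _ = 2 * N₀ * log μ + 2 * log μ * d / Tf := by ring
          _ ≤ 2 * N₀ * log μ + ηs * d := by linarith

structure SwitchedLyapunov (τ : ℕ → ℝ) (μ lamA lamB : ℝ) (Va Vb : ℝ → ℝ) : Prop where
  free_le : ∀ s, τ 0 ≤ s → Va s ≤ μ * Vb s
  attack_le : ∀ s, τ 0 ≤ s → Vb s ≤ μ * Va s
  decay : ∀ k : ℕ, ∀ s u : ℝ, τ (2 * k) ≤ s → s ≤ u → u ≤ τ (2 * k + 1) →
    Va u ≤ exp (-lamA * (u - s)) * Va s
  growth : ∀ k : ℕ, ∀ s u : ℝ, τ (2 * k + 1) ≤ s → s ≤ u → u ≤ τ (2 * k + 2) →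
    Vb u ≤ exp (lamB * (u - s)) * Vb s

namespace SwitchedLyapunov

variable {τ : ℕ → ℝ} {μ lamA lamB : ℝ} {Va Vb : ℝ → ℝ}

theorem attack_bound_of_free_bound (h : SwitchedLyapunov τ μ lamA lamB Va Vb)
    (hτ : Monotone τ) (hμ : 0 ≤ μ) {m : ℕ}
    (hfree : Va (τ (2 * m + 1)) ≤ μ ^ (2 * m) * exp ((lamA + lamB) *
      attackTime τ m (τ (2 * m + 1)) - lamA * (τ (2 * m + 1) - τ 0)) * Va (τ 0))
    {u : ℝ} (hu : u ∈ Icc (τ (2 * m + 1)) (τ (2 * m + 2))) :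
    Vb u ≤ μ ^ (2 * m + 1) *
      exp ((lamA + lamB) * attackTime τ (m + 1) u - lamA * (u - τ 0)) * Va (τ 0) := by
  set s := τ (2 * m + 1)
  calc Vb u ≤ exp (lamB * (u - s)) * Vb s := h.growth m s u le_rfl hu.1 hu.2
    _ ≤ exp (lamB * (u - s)) * (μ * (μ ^ (2 * m) * exp ((lamA + lamB) * attackTime τ m s -
          lamA * (s - τ 0)) * Va (τ 0))) := by
        gcongr
        exact (h.attack_le s (hτ (Nat.zero_le _))).trans (mul_le_mul_of_nonneg_left hfree hμ)
    _ = μ ^ (2 * m + 1) *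
          exp ((lamA + lamB) * attackTime τ (m + 1) u - lamA * (u - τ 0)) * Va (τ 0) := by
        rw [attackTime_succ_of_mem_Icc hτ hu, show (lamA + lamB) * (attackTime τ m s + (u - s)) -
          lamA * (u - τ 0) = lamB * (u - s) + ((lamA + lamB) * attackTime τ m s -
          lamA * (s - τ 0)) by ring, exp_add, pow_succ]
        ring

theorem free_bound_of_attack_bound (h : SwitchedLyapunov τ μ lamA lamB Va Vb)
    (hτ : Monotone τ) (hμ : 0 ≤ μ) {m : ℕ}
    (hattack : Vb (τ (2 * m + 2)) ≤ μ ^ (2 * m + 1) * exp ((lamA + lamB) *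
      attackTime τ (m + 1) (τ (2 * m + 2)) - lamA * (τ (2 * m + 2) - τ 0)) * Va (τ 0))
    {u : ℝ} (hu : u ∈ Icc (τ (2 * (m + 1))) (τ (2 * (m + 1) + 1))) :
    Va u ≤ μ ^ (2 * (m + 1)) *
      exp ((lamA + lamB) * attackTime τ (m + 1) u - lamA * (u - τ 0)) * Va (τ 0) := by
  set s := τ (2 * (m + 1))
  calc Va u ≤ exp (-lamA * (u - s)) * Va s := h.decay (m + 1) s u le_rfl hu.1 hu.2
    _ ≤ exp (-lamA * (u - s)) * (μ * (μ ^ (2 * m + 1) * exp ((lamA + lamB) *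
          attackTime τ (m + 1) s - lamA * (s - τ 0)) * Va (τ 0))) := by
        gcongr
        exact (h.free_le s (hτ (Nat.zero_le _))).trans (mul_le_mul_of_nonneg_left hattack hμ)
    _ = μ ^ (2 * (m + 1)) *
          exp ((lamA + lamB) * attackTime τ (m + 1) u - lamA * (u - τ 0)) * Va (τ 0) := by
        rw [attackTime_of_le hτ hu.1, ← attackTime_of_le hτ le_rfl, show (lamA + lamB) *
          attackTime τ (m + 1) s - lamA * (u - τ 0) = -lamA * (u - s) + ((lamA + lamB) *
          attackTime τ (m + 1) s - lamA * (s - τ 0)) by ring, exp_add, mul_add, pow_succ]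
        ring

theorem free_bound (h : SwitchedLyapunov τ μ lamA lamB Va Vb) (hτ : Monotone τ) (hμ : 0 ≤ μ) :
    ∀ (m : ℕ), ∀ u ∈ Icc (τ (2 * m)) (τ (2 * m + 1)), Va u ≤ μ ^ (2 * m) *
      exp ((lamA + lamB) * attackTime τ m u - lamA * (u - τ 0)) * Va (τ 0)
  | 0, u, hu => by
    simpa [attackTime] using h.decay 0 (τ 0) u le_rfl hu.1 hu.2
  | m + 1, _, hu =>
    h.free_bound_of_attack_bound hτ hμ
      (h.attack_bound_of_free_bound hτ hμ (h.free_bound hτ hμ m _ ⟨hτ (by omega), le_rfl⟩)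
        ⟨hτ (by omega), le_rfl⟩) hu

theorem attack_bound (h : SwitchedLyapunov τ μ lamA lamB Va Vb) (hτ : Monotone τ) (hμ : 0 ≤ μ)
    (m : ℕ) {u : ℝ} (hu : u ∈ Icc (τ (2 * m + 1)) (τ (2 * m + 2))) :
    Vb u ≤ μ ^ (2 * m + 1) *
      exp ((lamA + lamB) * attackTime τ (m + 1) u - lamA * (u - τ 0)) * Va (τ 0) :=
  h.attack_bound_of_free_bound hτ hμ (h.free_bound hτ hμ m _ ⟨hτ (by omega), le_rfl⟩) hu

theorem le_of_mem_Ico (h : SwitchedLyapunov τ μ lamA lamB Va Vb) (hτ : StrictMono τ)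
    (hμ : 0 ≤ μ) {V : ℝ → ℝ} (hfree : ∀ t ∉ attackSet τ, V t = Va t)
    (hattack : ∀ t ∈ attackSet τ, V t = Vb t) {n : ℕ} {t : ℝ} (ht : t ∈ Ico (τ n) (τ (n + 1))) :
    V t ≤ μ ^ n * exp ((lamA + lamB) * attackTime τ ((n + 1) / 2) t - lamA * (t - τ 0)) *
      Va (τ 0) := by
  obtain ⟨m, rfl | rfl⟩ := Nat.even_or_odd' n
  · rw [hfree t (notMem_attackSet hτ ht), show (2 * m + 1) / 2 = m by omega]
    exact h.free_bound hτ.monotone hμ m t ⟨ht.1, ht.2.le⟩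
  · rw [hattack t (mem_iUnion.2 ⟨m, ht⟩), show (2 * m + 1 + 1) / 2 = m + 1 by omega]
    exact h.attack_bound hτ.monotone hμ m ⟨ht.1, ht.2.le⟩

end SwitchedLyapunov

theorem switching_bound_frequency_duration_general
    (t₀ : ℝ) (τ : ℕ → ℝ) (hτ0 : τ 0 = t₀) (hτmono : StrictMono τ)
    (hτtop : Filter.Tendsto τ Filter.atTop Filter.atTop)
    (lamA lamB : ℝ) (hlamB : 0 < lamB)
    (μ : ℝ) (hμ : 1 < μ)
    (Va Vb : ℝ → ℝ) (hVa0 : ∀ s, 0 ≤ Va s)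
    (hab : ∀ s, t₀ ≤ s → Va s ≤ μ * Vb s)
    (hba : ∀ s, t₀ ≤ s → Vb s ≤ μ * Va s)
    (hdec : ∀ k : ℕ, ∀ s u : ℝ, τ (2 * k) ≤ s → s ≤ u → u ≤ τ (2 * k + 1) →
      Va u ≤ Real.exp (-lamA * (u - s)) * Va s)
    (hinc : ∀ k : ℕ, ∀ s u : ℝ, τ (2 * k + 1) ≤ s → s ≤ u → u ≤ τ (2 * k + 2) →
      Vb u ≤ Real.exp (lamB * (u - s)) * Vb s)
    (Na : ℝ → ℕ) (hNa : ∀ t, Na t = Set.ncard {k : ℕ | τ (2 * k + 1) ≤ t})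
    (Ξa : ℝ → ℝ)
    (hΞa : ∀ t, Ξa t =
      (volume ((⋃ k : ℕ, Set.Ico (τ (2 * k + 1)) (τ (2 * k + 2))) ∩ Set.Icc t₀ t)).toReal)
    (ηs : ℝ) (hηs0 : 0 < ηs) (hηsA : ηs < lamA)
    (N₀ Tf : ℝ) (hTf : 2 * Real.log μ / ηs ≤ Tf)
    (hfreq : ∀ t, t₀ ≤ t → (Na t : ℝ) ≤ N₀ + (t - t₀) / Tf)
    (T₀ Ta : ℝ) (hTa : (lamA + lamB) / (lamA - ηs) < Ta)
    (hdur : ∀ t, t₀ ≤ t → Ξa t ≤ T₀ + (t - t₀) / Ta)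
    (V : ℝ → ℝ)
    (hVattack : ∀ t, (∃ k : ℕ, τ (2 * k + 1) ≤ t ∧ t < τ (2 * k + 2)) → V t = Vb t)
    (hVfree : ∀ t, (¬ ∃ k : ℕ, τ (2 * k + 1) ≤ t ∧ t < τ (2 * k + 2)) → V t = Va t) :
    0 < lamA - (lamA + lamB) / Ta - ηs ∧
    ∀ t, t₀ ≤ t →
      V t ≤ Real.exp ((lamA + lamB) * T₀ + 2 * N₀ * Real.log μ) *
        Real.exp (-(lamA - (lamA + lamB) / Ta - ηs) * (t - t₀)) * V t₀ := by
  subst hτ0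
  have hc : 0 < lamA + lamB := by linarith
  have hTa₀ : 0 < Ta := (div_pos hc (sub_pos.2 hηsA)).trans hTa
  have hfree : ∀ t ∉ attackSet τ, V t = Va t :=
    fun t ht => hVfree t fun ⟨k, hk⟩ => ht (mem_iUnion.2 ⟨k, hk⟩)
  have hV₀ : V (τ 0) = Va (τ 0) :=
    hfree _ (notMem_attackSet hτmono (m := 0) ⟨le_rfl, hτmono zero_lt_one⟩)
  have hL : SwitchedLyapunov τ μ lamA lamB Va Vb := ⟨hab, hba, hdec, hinc⟩
  refine ⟨by linarith [(div_lt_comm₀ (sub_pos.2 hηsA) hTa₀).1 hTa], fun t ht => ?_⟩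
  obtain ⟨n, hn⟩ := exists_mem_Ico_succ_of_tendsto hτtop ht
  have hNat : Na t = (n + 1) / 2 := (hNa t).trans (ncard_setOf_le_of_mem_Ico hτmono hn)
  have hswitches : (n : ℝ) ≤ 2 * (N₀ + (t - τ 0) / Tf) :=
    calc (n : ℝ) ≤ 2 * (Na t : ℝ) := by rw [hNat]; exact_mod_cast (by omega : n ≤ 2 * ((n + 1) / 2))
      _ ≤ 2 * (N₀ + (t - τ 0) / Tf) := by linarith [hfreq t ht]
  have hattackTime : attackTime τ (Na t) t ≤ T₀ + (t - τ 0) / Ta :=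
    calc attackTime τ (Na t) t ≤ Ξa t := by rw [hΞa]; exact attackTime_le_volume hτmono.monotone _ t
      _ ≤ T₀ + (t - τ 0) / Ta := hdur t ht
  calc V t ≤ μ ^ n * exp ((lamA + lamB) * attackTime τ ((n + 1) / 2) t - lamA * (t - τ 0)) *
        Va (τ 0) := hL.le_of_mem_Ico hτmono (by linarith) hfree
          (fun t ht => hVattack t (mem_iUnion.1 ht)) hn
    _ ≤ exp (2 * N₀ * log μ + ηs * (t - τ 0)) *
        exp ((lamA + lamB) * (T₀ + (t - τ 0) / Ta) - lamA * (t - τ 0)) * Va (τ 0) := by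
      gcongr
      · exact hVa0 _
      · exact pow_le_exp_of_le_frequency hμ hηs0 hTf (by linarith) hswitches
      · exact hNat ▸ hattackTime
    _ = _ := by
      rw [hV₀, ← exp_add, ← exp_add]
      congr 2
      ring

/-- **abstract frequency/duration argument of Theorem 1.**
Under the switching setup with comparable Lyapunov functions `V_a, V_b`
(decay rate `λ_a` off attacks, growth rate `λ_b` under attacks), if the attack
frequency satisfies `N_a(t₀,t) ≤ N₀ + (t−t₀)/T_f` with `T_f ≥ 2 ln μ / η*` for some
`η* ∈ (0, λ_a)`, and the attack duration satisfies `|Ξ_a(t₀,t)| ≤ T₀ + (t−t₀)/T_a`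
with `T_a > (λ_a+λ_b)/(λ_a−η*)`, then `η := λ_a − (λ_a+λ_b)/T_a − η* > 0` and the
piecewise Lyapunov function `V` satisfies
`V(t) ≤ e^{(λ_a+λ_b)T₀ + 2N₀ ln μ} e^{−η(t−t₀)} V(t₀)` for all `t ≥ t₀`. -/
theorem switching_bound_frequency_duration
    (t₀ : ℝ) (τ : ℕ → ℝ) (hτ0 : τ 0 = t₀) (hτmono : StrictMono τ)
    (hτtop : Filter.Tendsto τ Filter.atTop Filter.atTop)
    (lamA lamB : ℝ) (hlamA : 0 < lamA) (hlamB : 0 < lamB)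
    (μ : ℝ) (hμ : 1 < μ)
    (Va Vb : ℝ → ℝ) (hVa0 : ∀ s, 0 ≤ Va s) (hVb0 : ∀ s, 0 ≤ Vb s)
    (hab : ∀ s, t₀ ≤ s → Va s ≤ μ * Vb s)
    (hba : ∀ s, t₀ ≤ s → Vb s ≤ μ * Va s)
    (hdec : ∀ k : ℕ, ∀ s u : ℝ, τ (2 * k) ≤ s → s ≤ u → u ≤ τ (2 * k + 1) →
      Va u ≤ Real.exp (-lamA * (u - s)) * Va s)
    (hinc : ∀ k : ℕ, ∀ s u : ℝ, τ (2 * k + 1) ≤ s → s ≤ u → u ≤ τ (2 * k + 2) →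
      Vb u ≤ Real.exp (lamB * (u - s)) * Vb s)
    (Na : ℝ → ℕ) (hNa : ∀ t, Na t = Set.ncard {k : ℕ | τ (2 * k + 1) ≤ t})
    (Ξa : ℝ → ℝ)
    (hΞa : ∀ t, Ξa t =
      (volume ((⋃ k : ℕ, Set.Ico (τ (2 * k + 1)) (τ (2 * k + 2))) ∩ Set.Icc t₀ t)).toReal)
    (ηs : ℝ) (hηs0 : 0 < ηs) (hηsA : ηs < lamA)
    (N₀ Tf : ℝ) (hN₀ : 0 < N₀) (hTf : 2 * Real.log μ / ηs ≤ Tf)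
    (hfreq : ∀ t, t₀ ≤ t → (Na t : ℝ) ≤ N₀ + (t - t₀) / Tf)
    (T₀ Ta : ℝ) (hT₀ : 0 ≤ T₀) (hTa : (lamA + lamB) / (lamA - ηs) < Ta)
    (hdur : ∀ t, t₀ ≤ t → Ξa t ≤ T₀ + (t - t₀) / Ta)
    (V : ℝ → ℝ)
    (hVattack : ∀ t, (∃ k : ℕ, τ (2 * k + 1) ≤ t ∧ t < τ (2 * k + 2)) → V t = Vb t)
    (hVfree : ∀ t, (¬ ∃ k : ℕ, τ (2 * k + 1) ≤ t ∧ t < τ (2 * k + 2)) → V t = Va t) :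
    0 < lamA - (lamA + lamB) / Ta - ηs ∧
    ∀ t, t₀ ≤ t →
      V t ≤ Real.exp ((lamA + lamB) * T₀ + 2 * N₀ * Real.log μ) *
        Real.exp (-(lamA - (lamA + lamB) / Ta - ηs) * (t - t₀)) * V t₀ :=
  switching_bound_frequency_duration_general t₀ τ hτ0 hτmono hτtop lamA lamB hlamB μ hμ Va Vb hVa0
    hab hba hdec hinc Na hNa Ξa hΞa ηs hηs0 hηsA N₀ Tf hTf hfreq T₀ Ta hTa hdur V hVattack hVfree
end
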